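/- arXiv:1611.01645 — 9 statements merged into one kernel-verified Lean document; each statement's English description precedes it below -/
import Mathlib

section
/- A point x of ℝ^{6mn} with all coordinates in {0,1} is an integral point of SATP_LP(m,n) if and only if x = z(r,c) for some r ∈ {0,1}^m and c ∈ {0,1,2}^n; moreover, the map (r,c) ↦ z(r,c) is injective, so the integral points of SATP_LP(m,n) are in bijection with pairs (r,c) ∈ {0,1}^m × {0,1,2}^n. -/
open Finset

/-- A point of ℝ^{6mn}: coordinates x^{k,l}_{i,j} with `i : Fin m`, `j : Fin n`,
`k : Fin 3` (the paper's k-1, since the paper indexes k ∈ {1,2,3}) and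
`l : Fin 2` (the paper's l-1). -/
abbrev Pt (m n : ℕ) := Fin m → Fin n → Fin 3 → Fin 2 → ℝ

/-- The relaxation polytope SATP_LP(m,n), given by the constraints (i)-(iv). -/
def SATPLP (m n : ℕ) : Set (Pt m n) :=
  {x | (∀ i j, ∑ k, ∑ l, x i j k l = 1) ∧
       (∀ i j t, ∑ k, x i j k 0 = ∑ k, x i t k 0) ∧
       (∀ k j i s, x i j k 0 + x i j k 1 = x s j k 0 + x s j k 1) ∧
       (∀ i j k l, 0 ≤ x i j k l)}

/-- The integral points of SATP_LP(m,n): the points all of whose coordinates are 0 or 1. -/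
def IntPts (m n : ℕ) : Set (Pt m n) :=
  {x | x ∈ SATPLP m n ∧ ∀ i j k l, x i j k l = 0 ∨ x i j k l = 1}

/-- SATP(m,n): the convex hull of the integral points of SATP_LP(m,n). -/
def SATP (m n : ℕ) : Set (Pt m n) := convexHull ℝ (IntPts m n)

/-- The 0-1 point z(r,c): coordinate (i,j,k,l) equals 1 iff k = c_j and l = r_i
(in the paper's 1-based notation, k = c_j + 1 and l = r_i + 1). -/
def zpt {m n : ℕ} (r : Fin m → Fin 2) (c : Fin n → Fin 3) : Pt m n :=
  fun i j k l => if k = c j ∧ l = r i then 1 else 0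

/-- Auxiliary: a 0-1 function with sum 1 has a unique position equal to 1. -/
lemma satp_unique_one {α : Type*} [Fintype α] (f : α → ℝ)
    (h01 : ∀ a, f a = 0 ∨ f a = 1) (hsum : ∑ a, f a = 1) :
    ∃ a, f a = 1 ∧ ∀ b, f b = 1 → b = a := by
  classical
  have hex : ∃ a, f a = 1 := by
    by_contra h
    push_neg at h
    have : ∀ a, f a = 0 := fun a => (h01 a).resolve_right (h a)
    rw [Finset.sum_congr rfl (fun a _ => this a)] at hsum
    simp at hsum
  obtain ⟨a, ha⟩ := hex
  refine ⟨a, ha, ?_⟩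
  intro b hb
  by_contra hne
  have hsub : ({b, a} : Finset α) ⊆ Finset.univ := Finset.subset_univ _
  have hle : ∑ c ∈ ({b, a} : Finset α), f c ≤ ∑ c, f c := by
    refine Finset.sum_le_sum_of_subset_of_nonneg hsub ?_
    intro c _ _
    rcases h01 c with h | h <;> rw [h] <;> norm_num
  rw [Finset.sum_pair hne, ha, hb, hsum] at hle
  norm_num at hle

/-- a 0-1 valued point belongs to SATP_LP(m,n) (i.e. is an integral point
of SATP_LP(m,n)) iff it equals z(r,c) for some r ∈ {0,1}^m, c ∈ {0,1,2}^n; moreover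
(r,c) ↦ z(r,c) is injective. -/
theorem stmt0 (m n : ℕ) (hm : 0 < m) (hn : 0 < n)
    (x : Pt m n) (hx01 : ∀ i j k l, x i j k l = 0 ∨ x i j k l = 1) :
    (x ∈ IntPts m n ↔ ∃ (r : Fin m → Fin 2) (c : Fin n → Fin 3), x = zpt r c) ∧
    Function.Injective
      (fun rc : (Fin m → Fin 2) × (Fin n → Fin 3) => (zpt rc.1 rc.2 : Pt m n)) := by
  classical
  set i0 : Fin m := ⟨0, hm⟩
  set j0 : Fin n := ⟨0, hn⟩
  have fin2 : ∀ a : Fin 2, a = 0 ∨ a = 1 := by decide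
  have fin3 : ∀ a : Fin 3, a = 0 ∨ a = 1 ∨ a = 2 := by decide
  constructor
  · constructor
    · -- forward direction
      rintro ⟨⟨h1, h2, h3, _⟩, -⟩
      have key : ∀ i j, ∃ q : Fin 3 × Fin 2, x i j q.1 q.2 = 1 ∧
          ∀ q' : Fin 3 × Fin 2, x i j q'.1 q'.2 = 1 → q' = q := by
        intro i j
        refine satp_unique_one (fun q : Fin 3 × Fin 2 => x i j q.1 q.2)
          (fun q => hx01 i j q.1 q.2) ?_
        rw [Fintype.sum_prod_type]
        exact h1 i j
      choose p hp1 hp2 using key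
      have hxval : ∀ i j k l, x i j k l = if (k, l) = p i j then 1 else 0 := by
        intro i j k l
        by_cases h : (k, l) = p i j
        · rw [if_pos h]
          have := hp1 i j
          rw [← h] at this
          exact this
        · rw [if_neg h]
          rcases hx01 i j k l with h0 | h1'
          · exact h0
          · exact absurd (hp2 i j (k, l) h1') h
      have hS0 : ∀ i j, ∑ k, x i j k 0 = if (p i j).2 = 0 then 1 else 0 := by
        intro i j
        rw [Fin.sum_univ_three, hxval, hxval, hxval]
        obtain ⟨pk, pl⟩ := p i j
        fin_cases pk <;> fin_cases pl <;> simp [Prod.ext_iff]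
      have hT : ∀ i j k, x i j k 0 + x i j k 1 = if (p i j).1 = k then 1 else 0 := by
        intro i j k
        rw [hxval, hxval]
        obtain ⟨pk, pl⟩ := p i j
        fin_cases pl <;> simp [Prod.ext_iff, eq_comm]
      have hl : ∀ i j, (p i j).2 = (p i j0).2 := by
        intro i j
        have := h2 i j j0
        rw [hS0, hS0] at this
        by_cases h : (p i j).2 = 0 <;> by_cases h' : (p i j0).2 = 0
        · rw [h, h']
        · rw [if_pos h, if_neg h'] at this; norm_num at this
        · rw [if_neg h, if_pos h'] at this; norm_num at this
        · rcases fin2 (p i j).2 with h0 | h1' <;> rcases fin2 (p i j0).2 with h0' | h1''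
          · exact absurd h0 h
          · exact absurd h0 h
          · exact absurd h0' h'
          · rw [h1', h1'']
      have hk : ∀ i j, (p i j).1 = (p i0 j).1 := by
        intro i j
        have := h3 (p i j).1 j i i0
        rw [hT, hT, if_pos rfl] at this
        by_cases h : (p i0 j).1 = (p i j).1
        · exact h.symm
        · rw [if_neg h] at this; norm_num at this
      refine ⟨fun i => (p i j0).2, fun j => (p i0 j).1, ?_⟩
      funext i j k l
      rw [hxval, zpt]
      have hpij : p i j = ((p i0 j).1, (p i j0).2) := by
        rw [Prod.ext_iff]
        exact ⟨hk i j, hl i j⟩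
      rw [hpij]
      simp [Prod.ext_iff]
    · -- backward direction
      rintro ⟨r, c, rfl⟩
      refine ⟨⟨?_, ?_, ?_, ?_⟩, ?_⟩
      · intro i j
        simp only [zpt, Fin.sum_univ_three, Fin.sum_univ_two]
        rcases fin3 (c j) with h | h | h <;> rcases fin2 (r i) with h' | h' <;>
          rw [h, h'] <;> norm_num [Fin.ext_iff]
      · intro i j t
        simp only [zpt, Fin.sum_univ_three]
        rcases fin3 (c j) with h | h | h <;> rcases fin3 (c t) with h'' | h'' | h'' <;>
          rcases fin2 (r i) with h' | h' <;> rw [h, h', h''] <;> norm_num [Fin.ext_iff]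
      · intro k j i s
        simp only [zpt, Fin.sum_univ_two]
        rcases fin2 (r i) with h | h <;> rcases fin2 (r s) with h' | h' <;>
          rw [h, h'] <;> by_cases hc : k = c j <;> simp [hc]
      · intro i j k l
        rw [zpt]
        by_cases h : k = c j ∧ l = r i <;> simp [h]
      · intro i j k l
        rw [zpt]
        by_cases h : k = c j ∧ l = r i <;> simp [h]
  · -- injectivity
    rintro ⟨r, c⟩ ⟨r', c'⟩ h
    simp only at h
    have hr : r = r' := by
      funext i
      have := congrFun (congrFun (congrFun (congrFun h i) j0) (c j0)) (r i)
      have hL : zpt r c i j0 (c j0) (r i) = 1 := if_pos ⟨rfl, rfl⟩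
      rw [hL, zpt] at this
      by_cases hh : c j0 = c' j0 ∧ r i = r' i
      · exact hh.2
      · rw [if_neg hh] at this; norm_num at this
    have hc : c = c' := by
      funext j
      have := congrFun (congrFun (congrFun (congrFun h i0) j) (c j)) (r i0)
      have hL : zpt r c i0 j (c j) (r i0) = 1 := if_pos ⟨rfl, rfl⟩
      rw [hL, zpt] at this
      by_cases hh : c j = c' j ∧ r i0 = r' i0
      · exact hh.1
      · rw [if_neg hh] at this; norm_num at this
    rw [Prod.ext_iff]
    exact ⟨hr, hc⟩
end

section
/- The set of extreme points of the polytope SATP(m,n) is exactly the set of integral points of SATP_LP(m,n), and SATP(m,n) has exactly 2^m · 3^n extreme points. -/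
/-!
An integral point carries a single 1 in each cell `(i, j)`. Constraint (iii) forces the
`k`-coordinate of that 1 to depend on `j` only, and constraint (ii) forces its `l`-coordinate to
depend on `i` only, so integral points correspond to pairs of labellings
`Fin m → Fin 2`, `Fin n → Fin 3`. They are extreme in SATP because 0/1 vectors are extreme in the
unit cube, which contains SATP; conversely the extreme points of a convex hull lie in the
generating set.
-/

open Finset

theorem mem_extremePoints_convexHull_of_subset {𝕜 E : Type*} [Semiring 𝕜] [PartialOrder 𝕜]
    [AddCommMonoid E] [Module 𝕜 E] {A C : Set E} (hAC : A ⊆ C) (hC : Convex 𝕜 C) {x : E}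
    (hxA : x ∈ A) (hxC : x ∈ C.extremePoints 𝕜) : x ∈ (convexHull 𝕜 A).extremePoints 𝕜 :=
  inter_extremePoints_subset_extremePoints_of_subset (convexHull_min hAC hC)
    ⟨subset_convexHull 𝕜 A hxA, hxC⟩

section OneHot

variable {α β : Type*} [DecidableEq α] [DecidableEq β]

theorem sum_ite_and_right [Fintype β] (a : α) (b : β) (k : α) :
    ∑ l, (if a = k ∧ b = l then 1 else 0 : ℝ) = if a = k then 1 else 0 := by
  simp [ite_and]

theorem sum_ite_and_left [Fintype α] (a : α) (b : β) (l : β) :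
    ∑ k, (if a = k ∧ b = l then 1 else 0 : ℝ) = if b = l then 1 else 0 := by
  simp [ite_and]

theorem exists_eq_ite_and_of_sum_eq_one [Fintype α] [Fintype β] {y : α → β → ℝ}
    (h01 : ∀ k l, y k l = 0 ∨ y k l = 1) (hsum : ∑ k, ∑ l, y k l = 1) :
    ∃ a b, ∀ k l, y k l = if a = k ∧ b = l then 1 else 0 := by
  set f : α × β → ℝ := fun p => y p.1 p.2
  have hf : ∑ p, f p = 1 := by rw [Fintype.sum_prod_type]; exact hsum
  obtain ⟨p, hp⟩ : ∃ p, f p = 1 := by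
    by_contra! h
    have : ∑ p, f p = 0 := sum_eq_zero fun p _ => (h01 p.1 p.2).resolve_right (h p)
    linarith
  have hrest : ∑ q ∈ univ.erase p, f q = 0 := by
    linarith [add_sum_erase univ f (mem_univ p)]
  have hnonneg : ∀ q ∈ univ.erase p, 0 ≤ f q := fun q _ => by
    rcases h01 q.1 q.2 with h | h <;> simp [f, h]
  refine ⟨p.1, p.2, fun k l => ?_⟩
  split_ifs with hkl
  · obtain ⟨rfl, rfl⟩ := hkl
    exact hp
  · refine (sum_eq_zero_iff_of_nonneg hnonneg).1 hrest (k, l) (mem_erase.2 ⟨?_, mem_univ _⟩)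
    rintro rfl
    exact hkl ⟨rfl, rfl⟩

end OneHot

def unitCube (m n : ℕ) : Set (Pt m n) :=
  Set.univ.pi fun _ => Set.univ.pi fun _ => Set.univ.pi fun _ => Set.univ.pi fun _ => Set.Icc 0 1

theorem convex_unitCube (m n : ℕ) : Convex ℝ (unitCube m n) :=
  convex_pi fun _ _ => convex_pi fun _ _ => convex_pi fun _ _ => convex_pi fun _ _ => convex_Icc 0 1

theorem mem_extremePoints_unitCube {m n : ℕ} {x : Pt m n} :
    x ∈ (unitCube m n).extremePoints ℝ ↔ ∀ i j k l, x i j k l = 0 ∨ x i j k l = 1 := by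
  simp only [unitCube, extremePoints_pi, Set.extremePoints_Icc zero_le_one, Set.mem_univ_pi,
    Set.mem_insert_iff, Set.mem_singleton_iff]

theorem IntPts_subset_unitCube (m n : ℕ) : IntPts m n ⊆ unitCube m n := by
  rintro x ⟨-, h01⟩ i - j - k - l -
  rcases h01 i j k l with h | h <;> simp [h]

def satpVertex {m n : ℕ} (r : Fin m → Fin 2) (c : Fin n → Fin 3) : Pt m n :=
  fun i j k l => if c j = k ∧ r i = l then 1 else 0

theorem satpVertex_eq_one_iff {m n : ℕ} (r : Fin m → Fin 2) (c : Fin n → Fin 3)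
    (i : Fin m) (j : Fin n) (k : Fin 3) (l : Fin 2) :
    satpVertex r c i j k l = 1 ↔ c j = k ∧ r i = l := by
  unfold satpVertex
  split_ifs with h <;> simp [h]

theorem satpVertex_mem_IntPts {m n : ℕ} (r : Fin m → Fin 2) (c : Fin n → Fin 3) :
    satpVertex r c ∈ IntPts m n := by
  refine ⟨⟨fun i j => ?_, fun i j t => ?_, fun k j i s => ?_, fun i j k l => ?_⟩,
    fun i j k l => ?_⟩
  · simp only [satpVertex, sum_ite_and_right, sum_ite_eq, mem_univ, if_true]
  · simp only [satpVertex, sum_ite_and_left]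
  · rw [← Fin.sum_univ_two (satpVertex r c i j k), ← Fin.sum_univ_two (satpVertex r c s j k)]
    simp only [satpVertex, sum_ite_and_right]
  · unfold satpVertex; split_ifs <;> norm_num
  · unfold satpVertex; split_ifs <;> simp

theorem satpVertex_injective {m n : ℕ} (hm : 0 < m) (hn : 0 < n) :
    Function.Injective (fun p : (Fin m → Fin 2) × (Fin n → Fin 3) => satpVertex p.1 p.2) := by
  rintro ⟨r, c⟩ ⟨r', c'⟩ h
  have hone : ∀ i j, c' j = c j ∧ r' i = r i := fun i j =>
    (satpVertex_eq_one_iff r' c' i j (c j) (r i)).1 <| by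
      rw [← show satpVertex r c = satpVertex r' c' from h, satpVertex_eq_one_iff]
      exact ⟨rfl, rfl⟩
  ext1
  · exact funext fun i => (hone i ⟨0, hn⟩).2.symm
  · exact funext fun j => (hone ⟨0, hm⟩ j).1.symm

theorem exists_satpVertex_eq_of_mem_IntPts {m n : ℕ} (hm : 0 < m) (hn : 0 < n) {x : Pt m n}
    (hx : x ∈ IntPts m n) : ∃ r c, satpVertex r c = x := by
  obtain ⟨⟨hsum, hrow, hcol, -⟩, h01⟩ := hx
  choose κ μ hcell using fun i j => exists_eq_ite_and_of_sum_eq_one (h01 i j) (hsum i j)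
  have hκ : ∀ i s j, κ s j = κ i j := by
    intro i s j
    have h := hcol (κ i j) j i s
    rw [← Fin.sum_univ_two (x i j _), ← Fin.sum_univ_two (x s j _)] at h
    simp only [hcell, sum_ite_and_right] at h
    split_ifs at h with h' <;> norm_num at h
    exact h'
  have hμ : ∀ i j t, μ i t = μ i j := by
    intro i j t
    have h := hrow i j t
    simp only [hcell, sum_ite_and_left] at h
    split_ifs at h <;> norm_num at h <;> omega
  refine ⟨fun i => μ i ⟨0, hn⟩, fun j => κ ⟨0, hm⟩ j, ?_⟩
  funext i j k l
  rw [hcell, hκ ⟨0, hm⟩ i j, hμ i ⟨0, hn⟩ j]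
  rfl

theorem range_satpVertex {m n : ℕ} (hm : 0 < m) (hn : 0 < n) :
    Set.range (fun p : (Fin m → Fin 2) × (Fin n → Fin 3) => satpVertex p.1 p.2) = IntPts m n := by
  ext x
  constructor
  · rintro ⟨⟨r, c⟩, rfl⟩
    exact satpVertex_mem_IntPts r c
  · intro hx
    obtain ⟨r, c, rfl⟩ := exists_satpVertex_eq_of_mem_IntPts hm hn hx
    exact ⟨(r, c), rfl⟩

theorem extremePoints_SATP (m n : ℕ) : (SATP m n).extremePoints ℝ = IntPts m n :=
  extremePoints_convexHull_subset.antisymm fun _ hx =>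
    mem_extremePoints_convexHull_of_subset (IntPts_subset_unitCube m n) (convex_unitCube m n) hx
      (mem_extremePoints_unitCube.2 hx.2)

/-- the extreme points of SATP(m,n) are exactly the integral points of
SATP_LP(m,n), and there are exactly 2^m · 3^n of them. -/
theorem stmt1 (m n : ℕ) (hm : 0 < m) (hn : 0 < n) :
    Set.extremePoints ℝ (SATP m n) = IntPts m n ∧
    Nat.card (IntPts m n) = 2 ^ m * 3 ^ n := by
  refine ⟨extremePoints_SATP m n, ?_⟩
  rw [← range_satpVertex hm hn, Nat.card_range_of_injective (satpVertex_injective hm hn)]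
  simp
end

section
/- The maximum of ⟨v,x⟩ over x ∈ SATP(m,n) (equivalently, over the integral points of SATP_LP(m,n)) equals the maximum over truth assignments u ∈ {0,1}^m of the number of indices j ∈ {1,…,n} such that clause C_j has at least one literal made true by u. -/
open Finset

/-- Standard inner product on ℝ^{6mn}. -/
def dotp {m n : ℕ} (v x : Pt m n) : ℝ :=
  ∑ i, ∑ j, ∑ k, ∑ l, v i j k l * x i j k l

/-- A 3-clause over m Boolean variables: the literal at each of the three places.
A literal is a pair (variable, sign) where sign `0` is positive (the paper's s = 1)
and sign `1` is negated (the paper's s = 2). -/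
abbrev Clause (m : ℕ) := Fin 3 → Fin m × Fin 2

/-- Truth assignment u makes the literal (i,s) true iff s is positive and u i = 1,
or s is negated and u i = 0. -/
def LitTrue {m : ℕ} (u : Fin m → Fin 2) (lit : Fin m × Fin 2) : Prop :=
  (lit.2 = 0 ∧ u lit.1 = 1) ∨ (lit.2 = 1 ∧ u lit.1 = 0)

/-- The MAX-3SAT objective vector v: v^{k,s}_{i,j} = 1 iff the k-th literal of clause C_j
is (i,s). -/
def vVec {m n : ℕ} (C : Fin n → Clause m) : Pt m n :=
  fun i j k s => if C j k = (i, s) then 1 else 0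

open Classical in
/-- The number of clauses having at least one literal made true by u. -/
noncomputable def satCount {m n : ℕ} (C : Fin n → Clause m) (u : Fin m → Fin 2) : ℕ :=
  (Finset.univ.filter fun j => ∃ k, LitTrue u (C j k)).card

-- helper lemmas
lemma litTrue_iff {m : ℕ} (u : Fin m → Fin 2) (p : Fin m × Fin 2) :
    LitTrue u p ↔ p.2 ≠ u p.1 := by
  have : ∀ c s : Fin 2, ((s = 0 ∧ c = 1) ∨ (s = 1 ∧ c = 0)) ↔ s ≠ c := by decide
  exact this (u p.1) p.2

lemma dotp_eq {m n : ℕ} (C : Fin n → Clause m) (x : Pt m n) :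
    dotp (vVec C) x = ∑ j, ∑ k, x (C j k).1 j k (C j k).2 := by
  rw [dotp, Finset.sum_comm]
  refine Finset.sum_congr rfl fun j _ => ?_
  rw [Finset.sum_comm]
  refine Finset.sum_congr rfl fun k _ => ?_
  have : ∀ i l, vVec C i j k l * x i j k l
      = if i = (C j k).1 ∧ l = (C j k).2 then x i j k l else 0 := by
    intro i l
    simp only [vVec, Prod.ext_iff]
    split_ifs with h1 h2 h3 <;> simp_all <;> tauto
  simp_rw [this]
  simp [Finset.sum_ite_eq', ite_and]

open Classical in
lemma satCount_eq_sum {m n : ℕ} (C : Fin n → Clause m) (u : Fin m → Fin 2) :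
    (satCount C u : ℝ) = ∑ j, if ∃ k, LitTrue u (C j k) then (1:ℝ) else 0 := by
  rw [satCount, Finset.card_filter]
  push_cast
  apply Finset.sum_congr rfl
  intro j _
  by_cases h : ∃ k, LitTrue u (C j k) <;> simp [h]

lemma sumK (c : Fin 3) : ∑ k : Fin 3, (if k = c then (1:ℝ) else 0) = 1 := by
  simp [Finset.sum_ite_eq']

lemma sumB (c : Fin 2) : ∑ l : Fin 2, (if l = c then (0:ℝ) else 1) = 1 := by
  fin_cases c <;> simp [Fin.sum_univ_two]

lemma addB (c : Fin 2) :
    (if (0:Fin 2) = c then (0:ℝ) else 1) + (if (1:Fin 2) = c then 0 else 1) = 1 := by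
  fin_cases c <;> norm_num

lemma fin2cases (s : Fin 2) : s = 0 ∨ s = 1 := by fin_cases s <;> simp

/-- Per-clause bound ≤ 1, for any point of the LP (needs m > 0). -/
lemma clause_le_one {m n : ℕ} (hm : 0 < m) (C : Fin n → Clause m) (x : Pt m n)
    (hx : x ∈ SATPLP m n) (j : Fin n) :
    ∑ k, x (C j k).1 j k (C j k).2 ≤ 1 := by
  obtain ⟨h1, _, h3, h4⟩ := hx
  set i0 : Fin m := ⟨0, hm⟩
  calc ∑ k, x (C j k).1 j k (C j k).2
      ≤ ∑ k, (x i0 j k 0 + x i0 j k 1) := by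
        apply Finset.sum_le_sum
        intro k _
        rw [← h3 k j (C j k).1 i0]
        rcases fin2cases (C j k).2 with h | h <;> rw [h]
        · nlinarith [h4 (C j k).1 j k 1]
        · nlinarith [h4 (C j k).1 j k 0]
    _ = ∑ k, ∑ l, x i0 j k l := by
        apply Finset.sum_congr rfl; intro k _; rw [Fin.sum_univ_two]
    _ = 1 := h1 i0 j

open Classical in
/-- Upper bound for integral points. -/
lemma intpts_le {m n : ℕ} (hm : 0 < m) (hn : 0 < n) (C : Fin n → Clause m)
    (x : Pt m n) (hx : x ∈ IntPts m n) :
    ∃ u : Fin m → Fin 2, dotp (vVec C) x ≤ (satCount C u : ℝ) := by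
  obtain ⟨hlp, hbin⟩ := hx
  obtain ⟨h1, h2, h3, h4⟩ := hlp
  set j0 : Fin n := ⟨0, hn⟩
  refine ⟨fun i => if ∑ k, x i j0 k 0 = 0 then 0 else 1, ?_⟩
  set u : Fin m → Fin 2 := fun i => if ∑ k, x i j0 k 0 = 0 then 0 else 1 with hu
  have hA : ∀ i j k, u i = 0 → x i j k 0 = 0 := by
    intro i j k h
    have hc : ∑ k, x i j0 k 0 = 0 := by
      by_contra hc
      simp only [hu, if_neg hc] at h
      exact absurd h (by decide)
    have hz : ∑ k, x i j k 0 = 0 := by rw [h2 i j j0]; exact hc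
    have := (Finset.sum_eq_zero_iff_of_nonneg (fun k _ => h4 i j k 0)).mp hz
    exact this k (Finset.mem_univ k)
  have hB : ∀ i j k, u i = 1 → x i j k 1 = 0 := by
    intro i j k h
    have hc : ∑ k, x i j0 k 0 ≠ 0 := by
      by_contra hc
      simp only [hu, if_pos hc] at h
      exact absurd h (by decide)
    have ha : (1:ℝ) ≤ ∑ k, x i j k 0 := by
      rw [h2 i j j0]
      obtain ⟨k', _, hk'⟩ : ∃ k' ∈ Finset.univ, x i j0 k' 0 ≠ 0 := by
        by_contra hall
        push_neg at hall
        exact hc (Finset.sum_eq_zero fun k hk => hall k hk)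
      have : x i j0 k' 0 = 1 := (hbin i j0 k' 0).resolve_left hk'
      calc (1:ℝ) = x i j0 k' 0 := this.symm
        _ ≤ ∑ k, x i j0 k 0 :=
            Finset.single_le_sum (fun k _ => h4 i j0 k 0) (Finset.mem_univ k')
    have hsum : ∑ k, x i j k 0 + ∑ k, x i j k 1 = 1 := by
      rw [← Finset.sum_add_distrib]
      rw [← h1 i j]
      apply Finset.sum_congr rfl; intro k _; rw [Fin.sum_univ_two]
    have hz : ∑ k, x i j k 1 = 0 := by
      have hge : (0:ℝ) ≤ ∑ k, x i j k 1 := Finset.sum_nonneg fun k _ => h4 i j k 1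
      linarith
    have := (Finset.sum_eq_zero_iff_of_nonneg (fun k _ => h4 i j k 1)).mp hz
    exact this k (Finset.mem_univ k)
  rw [dotp_eq, satCount_eq_sum]
  apply Finset.sum_le_sum
  intro j _
  by_cases h : ∃ k, LitTrue u (C j k)
  · rw [if_pos h]
    exact clause_le_one hm C x ⟨h1, h2, h3, h4⟩ j
  · rw [if_neg h]
    push_neg at h
    apply le_of_eq
    apply Finset.sum_eq_zero
    intro k _
    have hfalse := h k
    rw [litTrue_iff] at hfalse
    replace hfalse : (C j k).2 = u (C j k).1 := not_not.mp hfalse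
    rcases fin2cases (u (C j k).1) with h0 | h0
    · rw [hfalse, h0]; exact hA _ j k h0
    · rw [hfalse, h0]; exact hB _ j k h0

open Classical in
/-- For each assignment u there is an integral point achieving satCount u. -/
lemma exists_intpt {m n : ℕ} (C : Fin n → Clause m) (u : Fin m → Fin 2) :
    ∃ x ∈ IntPts m n, dotp (vVec C) x = (satCount C u : ℝ) := by
  set κ : Fin n → Fin 3 := fun j =>
    if h : ∃ k, LitTrue u (C j k) then h.choose else 0 with hκ
  set x : Pt m n := fun i j k l =>
    (if k = κ j then (1:ℝ) else 0) * (if l = u i then 0 else 1) with hxdef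
  have hx1 : ∀ i j, ∑ k, ∑ l, x i j k l = 1 := by
    intro i j
    simp only [hxdef]
    rw [← Finset.sum_mul_sum]
    rw [sumK, sumB, one_mul]
  have hmem : x ∈ IntPts m n := by
    refine ⟨⟨hx1, ?_, ?_, ?_⟩, ?_⟩
    · intro i j t
      simp only [hxdef, ← Finset.sum_mul, sumK]
    · intro k j i s
      simp only [hxdef, ← mul_add, addB]
    · intro i j k l
      simp only [hxdef]
      split_ifs <;> norm_num
    · intro i j k l
      simp only [hxdef]
      split_ifs <;> norm_num
  refine ⟨x, hmem, ?_⟩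
  rw [dotp_eq, satCount_eq_sum]
  apply Finset.sum_congr rfl
  intro j _
  simp only [hxdef, ite_mul, one_mul, zero_mul]
  rw [Finset.sum_ite_eq' Finset.univ (κ j)
    (fun k => if (C j k).2 = u (C j k).1 then (0:ℝ) else 1)]
  rw [if_pos (Finset.mem_univ _)]
  by_cases h : ∃ k, LitTrue u (C j k)
  · rw [if_pos h]
    have hk : LitTrue u (C j (κ j)) := by
      simp only [hκ, dif_pos h]
      exact h.choose_spec
    rw [litTrue_iff] at hk
    rw [if_neg hk]
  · rw [if_neg h]
    push_neg at h
    have hk := h (κ j)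
    rw [litTrue_iff] at hk
    rw [if_pos (not_not.mp hk)]

/-- Linearity of dotp in the second argument under convex combos. -/
lemma dotp_combo {m n : ℕ} (v x y : Pt m n) (a b : ℝ) :
    dotp v (a • x + b • y) = a * dotp v x + b * dotp v y := by
  simp only [dotp, Pi.add_apply, Pi.smul_apply, smul_eq_mul,
    Finset.mul_sum, ← Finset.sum_add_distrib]
  repeat' apply Finset.sum_congr rfl; intro _ _
  ring


/-- the maximum of ⟨v,x⟩ over SATP(m,n) (equivalently, over the integral
points of SATP_LP(m,n)) equals the maximum over truth assignments u of the number of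
clauses satisfied by u. -/
theorem stmt2 (m n : ℕ) (hm : 0 < m) (hn : 0 < n) (C : Fin n → Clause m) :
    ∃ M : ℝ,
      IsGreatest (dotp (vVec C) '' SATP m n) M ∧
      IsGreatest (dotp (vVec C) '' IntPts m n) M ∧
      IsGreatest (Set.range fun u : Fin m → Fin 2 => (satCount C u : ℝ)) M := by
  classical
  obtain ⟨u₀, -, hmax⟩ := Finset.exists_max_image (Finset.univ : Finset (Fin m → Fin 2))
    (satCount C) Finset.univ_nonempty
  have hub : ∀ y ∈ dotp (vVec C) '' IntPts m n, y ≤ (satCount C u₀ : ℝ) := by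
    rintro y ⟨x, hx, rfl⟩
    obtain ⟨u, hu⟩ := intpts_le hm hn C x hx
    calc dotp (vVec C) x ≤ (satCount C u : ℝ) := hu
      _ ≤ (satCount C u₀ : ℝ) := by exact_mod_cast hmax u (Finset.mem_univ u)
  have hmemI : (satCount C u₀ : ℝ) ∈ dotp (vVec C) '' IntPts m n := by
    obtain ⟨x, hx, hval⟩ := exists_intpt C u₀
    exact ⟨x, hx, hval⟩
  refine ⟨(satCount C u₀ : ℝ), ⟨?_, ?_⟩, ⟨hmemI, hub⟩, ⟨u₀, rfl⟩, ?_⟩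
  · obtain ⟨x, hx, hval⟩ := hmemI
    exact ⟨x, subset_convexHull ℝ _ hx, hval⟩
  · rintro y ⟨x, hx, rfl⟩
    have hconv : Convex ℝ {z : Pt m n | dotp (vVec C) z ≤ (satCount C u₀ : ℝ)} := by
      intro p hp q hq a b ha hb hab
      simp only [Set.mem_setOf_eq] at *
      rw [dotp_combo]
      nlinarith [hp, hq]
    exact convexHull_min (s := IntPts m n)
      (fun z hz => hub (dotp (vVec C) z) ⟨z, hz, rfl⟩) hconv hx
  · rintro y ⟨u, rfl⟩
    show (satCount C u : ℝ) ≤ (satCount C u₀ : ℝ)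
    exact_mod_cast hmax u (Finset.mem_univ u)
end

section
/- Let z = z(r,c) be an integral point of SATP_LP(m,n) and u the associated truth assignment (u_i = 1 − r_i). Then for every j ∈ {1,…,n}, the column sum ∑_{i,k,s} v^{k,s}_{i,j} · z^{k,s}_{i,j} is at most 1, and it equals 1 if and only if the literal of clause C_j at position c_j + 1 is made true by u. -/
open Finset

/-- The j-th column sum ∑_{i,k,l} v^{k,l}_{i,j} · x^{k,l}_{i,j}. -/
def colsum {m n : ℕ} (v x : Pt m n) (j : Fin n) : ℝ :=
  ∑ i, ∑ k, ∑ l, v i j k l * x i j k l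

/-- Sign flip, the paper's s ↦ 3 - s (also serving as u_i = 1 - r_i). -/
def flipSign (s : Fin 2) : Fin 2 := if s = 0 then 1 else 0

/-- for the integral point z = z(r,c) and the associated truth assignment
u (u_i = 1 - r_i), every column sum of v·z is at most 1, with equality iff the literal of
clause C_j at position c_j + 1 is made true by u. -/
theorem stmt3 (m n : ℕ) (C : Fin n → Clause m)
    (r : Fin m → Fin 2) (c : Fin n → Fin 3)
    (u : Fin m → Fin 2) (hu : ∀ i, u i = flipSign (r i)) (j : Fin n) :
    colsum (vVec C) (zpt r c) j ≤ 1 ∧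
    (colsum (vVec C) (zpt r c) j = 1 ↔ LitTrue u (C j (c j))) := by
  set a := C j (c j) with ha
  have h2 : ∀ x : Fin 2, x = 0 ∨ x = 1 := by decide
  have h3 : ∀ x : Fin 3, x = 0 ∨ x = 1 ∨ x = 2 := by decide
  have step1 : ∀ i : Fin m,
      (∑ k, ∑ s, vVec C i j k s * zpt r c i j k s) = if a = (i, r i) then (1:ℝ) else 0 := by
    intro i
    unfold vVec zpt
    rcases h3 (c j) with hc | hc | hc <;>
      rcases h2 (r i) with hr | hr <;>
      simp [Fin.sum_univ_three, Fin.sum_univ_two, hc, hr, mul_ite] <;> rw [ha, hc]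
  have key : colsum (vVec C) (zpt r c) j = if a.2 = r a.1 then (1:ℝ) else 0 := by
    unfold colsum
    rw [Finset.sum_congr rfl (fun i _ => step1 i)]
    have hrw : ∀ i : Fin m,
        (if a = (i, r i) then (1:ℝ) else 0) = if a.1 = i then (if a.2 = r a.1 then (1:ℝ) else 0) else 0 := by
      intro i
      by_cases h : a.1 = i
      · subst h
        simp [Prod.ext_iff]
      · simp [Prod.ext_iff, h]
    rw [Finset.sum_congr rfl (fun i _ => hrw i), Finset.sum_ite_eq]
    simp
  have lt : LitTrue u a ↔ a.2 = r a.1 := by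
    unfold LitTrue
    rw [hu]
    unfold flipSign
    rcases h2 (r a.1) with h | h <;> rcases h2 a.2 with h' | h' <;> simp [h, h']
  constructor
  · rw [key]; split <;> norm_num
  · rw [key, lt]
    by_cases h : a.2 = r a.1 <;> simp [h]
end

section
/- There exists a truth assignment u ∈ {0,1}^m such that every clause C_1,…,C_n has exactly one literal made true by u, if and only if the maximum of ⟨w,x⟩ over x ∈ SATP_LP(m,n) equals 3n and the maximum of ⟨w,z⟩ over the integral points z of SATP_LP(m,n) equals 3n. -/
open Finset

/-- The X3SAT objective vector w: if clause C_j has literal (i,s) at place k then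
w^{k,s}_{i,j} = 1 and w^{q,3-s}_{i,j} = 1 for both places q ≠ k; all other coordinates
are 0. -/
def wVec {m n : ℕ} (C : Fin n → Clause m) : Pt m n :=
  fun i j k s => if C j k = (i, s) ∨ ∃ q, q ≠ k ∧ C j q = (i, flipSign s) then 1 else 0

/-!
Each term of ⟨w, x⟩ belonging to a variable `i` and a clause `C_j` is at most
`[i occurs in C_j] * ∑ₖ ∑ₗ x^{k,l}_{i,j} = [i occurs in C_j]`, so `⟨w, x⟩ ≤ 3n` on SATP_LP.
An integral point has a single `1` in each block `(i, j)`; constraint (ii) makes the sign `l`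
of that slot depend on `i` only, say `σ i`, and constraint (iii) makes its place `k` depend on
`j` only, say `K j`. At such a point the literal at place `q` of `C_j` contributes `1` exactly
when "its sign is `σ`" agrees with "`q = K j`", and `0` otherwise. So the value `3n` is attained
at an integral point iff, for the assignment `u = 1 - σ`, the literal at place `K j` is the only
true literal of `C_j`, for every `j`.
-/

lemma eq_flipSign_iff_ne {a s : Fin 2} : a = flipSign s ↔ a ≠ s := by
  revert a s; decide

lemma flipSign_flipSign (s : Fin 2) : flipSign (flipSign s) = s := by
  revert s; decide

lemma litTrue_iff_s4 {m : ℕ} (u : Fin m → Fin 2) (lit : Fin m × Fin 2) :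
    LitTrue u lit ↔ lit.2 = flipSign (u lit.1) := by
  unfold LitTrue; generalize lit.2 = s; generalize u lit.1 = a; revert a s; decide

lemma exists_eq_ite_of_sum_eq_one {ι : Type*} [Fintype ι] [DecidableEq ι] {f : ι → ℝ}
    (h01 : ∀ a, f a = 0 ∨ f a = 1) (hsum : ∑ a, f a = 1) :
    ∃ a₀, ∀ a, f a = if a = a₀ then 1 else 0 := by
  obtain ⟨a₀, -, ha₀⟩ := exists_ne_zero_of_sum_ne_zero (s := univ) (f := f) (by simp [hsum])
  have hrest : ∑ a ∈ univ.erase a₀, f a = 0 := by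
    linarith [add_sum_erase univ f (mem_univ a₀), (h01 a₀).resolve_left ha₀]
  refine ⟨a₀, fun a => ?_⟩
  split_ifs with h
  · exact h ▸ (h01 a₀).resolve_left ha₀
  · refine (sum_eq_zero_iff_of_nonneg fun b _ => ?_).mp hrest a (mem_erase.mpr ⟨h, mem_univ a⟩)
    rcases h01 b with hb | hb <;> simp [hb]

lemma exists_forall_eq_of_forall_eq {α β γ : Type*} [Nonempty γ] {f : α → β → γ}
    (h : ∀ a b b', f a b = f a b') : ∃ g : α → γ, ∀ a b, f a b = g a := by
  cases isEmpty_or_nonempty β with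
  | inl => exact ⟨fun _ => Classical.arbitrary γ, fun _ b => isEmptyElim b⟩
  | inr => exact ⟨fun a => f a (Classical.arbitrary β), fun a b => h a b _⟩

lemma ite_and_eq_zero_add_ite_and_eq_one (c : Prop) [Decidable c] (a : Fin 2) :
    ((if c ∧ 0 = a then 1 else 0 : ℝ) + if c ∧ 1 = a then 1 else 0) = if c then 1 else 0 := by
  fin_cases a <;> simp

section Polytope

variable {m n : ℕ}

def slotPoint (σ : Fin m → Fin 2) (K : Fin n → Fin 3) : Pt m n :=
  fun i j k l => if k = K j ∧ l = σ i then 1 else 0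

lemma slotPoint_mem_IntPts (σ : Fin m → Fin 2) (K : Fin n → Fin 3) :
    slotPoint σ K ∈ IntPts m n := by
  refine ⟨⟨fun i j => ?_, fun i j t => ?_, fun k j i s => ?_, fun i j k l => ?_⟩,
    fun i j k l => ?_⟩ <;> simp only [slotPoint]
  · simp [ite_and]
  · simp [ite_and]
  · rw [ite_and_eq_zero_add_ite_and_eq_one, ite_and_eq_zero_add_ite_and_eq_one]
  · split_ifs <;> norm_num
  · split_ifs <;> simp

lemma exists_eq_slotPoint_of_mem_IntPts {z : Pt m n} (hz : z ∈ IntPts m n) :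
    ∃ σ K, z = slotPoint σ K := by
  obtain ⟨⟨hsum, hsign, hplace, -⟩, h01⟩ := hz
  have hslot (i j) : ∃ p : Fin 3 × Fin 2, ∀ kl, z i j kl.1 kl.2 = if kl = p then 1 else 0 :=
    exists_eq_ite_of_sum_eq_one (fun kl => h01 i j kl.1 kl.2)
      (by rw [Fintype.sum_prod_type]; exact hsum i j)
  choose p hp using hslot
  have hz_eq (i j k l) : z i j k l = if k = (p i j).1 ∧ l = (p i j).2 then 1 else 0 := by
    simp only [hp i j (k, l), Prod.ext_iff]
  have hσ (i j t) : (p i j).2 = (p i t).2 := by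
    have h := hsign i j t
    simp only [hz_eq, ite_and, sum_ite_eq', mem_univ, if_true] at h
    split_ifs at h <;> grind
  have hK (j i s) : (p i j).1 = (p s j).1 := by
    have h := hplace (p i j).1 j i s
    simp only [hz_eq, ite_and_eq_zero_add_ite_and_eq_one] at h
    by_contra hne
    simp [hne] at h
  obtain ⟨σ, hσ'⟩ := exists_forall_eq_of_forall_eq hσ
  obtain ⟨K, hK'⟩ := exists_forall_eq_of_forall_eq hK
  refine ⟨σ, K, ?_⟩
  funext i j k l
  rw [hz_eq, slotPoint, hσ', hK']

lemma clause_eq_iff {c : Clause m} (hc : Function.Injective fun k => (c k).1) (q q' : Fin 3)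
    (s : Fin 2) : c q' = ((c q).1, s) ↔ q' = q ∧ (c q).2 = s := by
  constructor
  · intro h
    obtain rfl : q' = q := hc (congrArg Prod.fst h :)
    exact ⟨rfl, by rw [h]⟩
  · rintro ⟨rfl, rfl⟩
    rfl

lemma wVec_le_one (C : Fin n → Clause m) (i j k s) : wVec C i j k s ≤ 1 := by
  unfold wVec; split_ifs <;> norm_num

lemma wVec_eq_zero_of_forall_ne {C : Fin n → Clause m} {i : Fin m} {j : Fin n}
    (hi : ∀ q, (C j q).1 ≠ i) (k s) : wVec C i j k s = 0 := by
  unfold wVec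
  rw [if_neg]
  rintro (h | ⟨q, -, h⟩) <;> exact hi _ (by rw [h])

lemma wVec_clause_var {C : Fin n → Clause m} {j : Fin n}
    (hj : Function.Injective fun k => (C j k).1) (q k s) :
    wVec C (C j q).1 j k s = if ((C j q).2 = s ↔ k = q) then 1 else 0 := by
  unfold wVec
  refine if_congr ?_ rfl rfl
  simp only [clause_eq_iff hj, eq_flipSign_iff_ne]
  constructor
  · rintro (⟨rfl, h⟩ | ⟨_, hk, rfl, h⟩) <;> tauto
  · intro h
    by_cases hkq : k = q
    · exact Or.inl ⟨hkq, h.2 hkq⟩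
    · exact Or.inr ⟨q, Ne.symm hkq, rfl, mt h.1 hkq⟩

lemma dotp_wVec_le (C : Fin n → Clause m) {x : Pt m n} (hx : x ∈ SATPLP m n) :
    dotp (wVec C) x ≤ 3 * n := by
  obtain ⟨hsum, -, -, hnn⟩ := hx
  have hvar (j i) : ∑ k, ∑ l, wVec C i j k l * x i j k l ≤
      if i ∈ univ.image (fun q => (C j q).1) then 1 else 0 := by
    split_ifs with hi
    · calc _ ≤ ∑ k, ∑ l, x i j k l := sum_le_sum fun k _ => sum_le_sum fun l _ =>
            mul_le_of_le_one_left (hnn i j k l) (wVec_le_one C i j k l)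
        _ = 1 := hsum i j
    · simp only [mem_image, mem_univ, true_and, not_exists] at hi
      simp [wVec_eq_zero_of_forall_ne hi]
  calc dotp (wVec C) x = ∑ j, ∑ i, ∑ k, ∑ l, wVec C i j k l * x i j k l := sum_comm
    _ ≤ ∑ j, ∑ i, if i ∈ univ.image (fun q => (C j q).1) then 1 else 0 :=
        sum_le_sum fun j _ => sum_le_sum fun i _ => hvar j i
    _ = ∑ j, (#(univ.image fun q => (C j q).1) : ℝ) := by simp
    _ ≤ ∑ _j : Fin n, (3 : ℝ) := sum_le_sum fun j _ => by
        exact_mod_cast card_image_le.trans (card_fin 3).le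
    _ = 3 * n := by simp [mul_comm]

lemma dotp_wVec_slotPoint (C : Fin n → Clause m)
    (hdist : ∀ j, Function.Injective fun k => (C j k).1)
    (σ : Fin m → Fin 2) (K : Fin n → Fin 3) :
    dotp (wVec C) (slotPoint σ K) =
      #{p : Fin n × Fin 3 | (C p.1 p.2).2 = σ (C p.1 p.2).1 ↔ K p.1 = p.2} := by
  have hvar (j i) :
      ∑ k, ∑ l, wVec C i j k l * slotPoint σ K i j k l = wVec C i j (K j) (σ i) := by
    simp [slotPoint, mul_ite, ite_and, sum_ite_eq']
  have hclause (j) : ∑ i, wVec C i j (K j) (σ i) =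
      ∑ q, if ((C j q).2 = σ (C j q).1 ↔ K j = q) then 1 else 0 :=
    (Fintype.sum_of_injective _ (hdist j) _ (fun i => wVec C i j (K j) (σ i))
      (fun i hi => wVec_eq_zero_of_forall_ne (fun q h => hi ⟨q, h⟩) _ _)
      (fun q => (wVec_clause_var (hdist j) q _ _).symm)).symm
  calc dotp (wVec C) (slotPoint σ K)
        = ∑ j, ∑ i, ∑ k, ∑ l, wVec C i j k l * slotPoint σ K i j k l := sum_comm
    _ = ∑ j, ∑ q, if ((C j q).2 = σ (C j q).1 ↔ K j = q) then (1 : ℝ) else 0 := by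
        simp only [hvar, hclause]
    _ = _ := by rw [← Fintype.sum_prod_type', sum_boole]

lemma dotp_wVec_slotPoint_eq_iff (C : Fin n → Clause m)
    (hdist : ∀ j, Function.Injective fun k => (C j k).1)
    (σ : Fin m → Fin 2) (K : Fin n → Fin 3) :
    dotp (wVec C) (slotPoint σ K) = 3 * n ↔ ∀ j q, ((C j q).2 = σ (C j q).1 ↔ K j = q) := by
  have hcard : (3 * n : ℝ) = #(univ : Finset (Fin n × Fin 3)) := by simp [mul_comm]
  rw [dotp_wVec_slotPoint C hdist, hcard, Nat.cast_inj, card_filter_eq_iff]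
  simp [Prod.forall]

end Polytope

/-- there is a truth assignment making exactly one literal true in every
clause iff the maximum of ⟨w,x⟩ over SATP_LP(m,n) equals 3n and the maximum of ⟨w,z⟩
over the integral points equals 3n. -/
theorem stmt4 (m n : ℕ) (C : Fin n → Clause m)
    (hdist : ∀ j, Function.Injective fun k => (C j k).1) :
    (∃ u : Fin m → Fin 2, ∀ j, ∃! k, LitTrue u (C j k)) ↔
      (IsGreatest (dotp (wVec C) '' SATPLP m n) (3 * (n : ℝ)) ∧
       IsGreatest (dotp (wVec C) '' IntPts m n) (3 * (n : ℝ))) := by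
  simp only [forall_existsUnique_iff, litTrue_iff_s4]
  have hle : ∀ x ∈ SATPLP m n, dotp (wVec C) x ≤ 3 * n := fun x hx => dotp_wVec_le C hx
  constructor
  · rintro ⟨u, K, hK⟩
    have hz := slotPoint_mem_IntPts (flipSign ∘ u) K
    have hval := (dotp_wVec_slotPoint_eq_iff C hdist (flipSign ∘ u) K).2 fun j q => hK
    exact ⟨⟨⟨_, hz.1, hval⟩, Set.forall_mem_image.2 hle⟩,
      ⟨_, hz, hval⟩, Set.forall_mem_image.2 fun x hx => hle x hx.1⟩
  · rintro ⟨-, ⟨z, hz, hval⟩, -⟩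
    obtain ⟨σ, K, rfl⟩ := exists_eq_slotPoint_of_mem_IntPts hz
    refine ⟨flipSign ∘ σ, K, fun {j q} => ?_⟩
    rw [Function.comp_apply, flipSign_flipSign]
    exact (dotp_wVec_slotPoint_eq_iff C hdist σ K).1 hval j q
end

section
/- Let z = z(r,c) be an integral point of SATP_LP(m,n) and u the associated truth assignment (u_i = 1 − r_i). Then for every j ∈ {1,…,n}, the column sum ∑_{i,k,s} w^{k,s}_{i,j} · z^{k,s}_{i,j} is at most 3, and it equals 3 if and only if the literal of clause C_j at position c_j + 1 is made true by u and the other two literals of C_j are made false by u (in particular, C_j then has exactly one true literal). -/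
open Finset

/-- for the integral point z = z(r,c) and the associated truth assignment
u (u_i = 1 - r_i), every column sum of w·z is at most 3, with equality iff the literal of
C_j at position c_j + 1 is true under u and the other two literals of C_j are false
under u. -/
theorem stmt6 (m n : ℕ) (C : Fin n → Clause m)
    (hdist : ∀ j, Function.Injective fun k => (C j k).1)
    (r : Fin m → Fin 2) (c : Fin n → Fin 3)
    (u : Fin m → Fin 2) (hu : ∀ i, u i = flipSign (r i)) (j : Fin n) :
    colsum (wVec C) (zpt r c) j ≤ 3 ∧
    (colsum (wVec C) (zpt r c) j = 3 ↔
      (LitTrue u (C j (c j)) ∧ ∀ k, k ≠ c j → ¬ LitTrue u (C j k))) := by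

  classical
  have two : ∀ a : Fin 2, a = 0 ∨ a = 1 := by decide
  have flipne : ∀ a b : Fin 2, (a = flipSign b ↔ ¬ a = b) := by decide
  have hlit : ∀ lit : Fin m × Fin 2, LitTrue u lit ↔ lit.2 = r lit.1 := by
    intro lit
    rw [LitTrue, hu lit.1]
    rcases two (r lit.1) with h | h <;> rcases two lit.2 with h2 | h2 <;>
      simp [h, h2, flipSign]
  set Q : Fin 3 → Prop := fun k =>
    (k = c j ∧ (C j k).2 = r (C j k).1) ∨
      (k ≠ c j ∧ (C j k).2 = flipSign (r (C j k).1)) with hQdef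
  have hw : ∀ i, wVec C i j (c j) (r i)
      = if i ∈ (Finset.univ.filter Q).image (fun k => (C j k).1) then 1 else 0 := by
    intro i
    rw [wVec]
    congr 1
    simp only [Finset.mem_image, Finset.mem_filter, Finset.mem_univ, true_and,
      eq_iff_iff, hQdef]
    constructor
    · rintro (h | ⟨q, hq, hCq⟩)
      · exact ⟨c j, Or.inl ⟨rfl, by rw [h]⟩, by rw [h]⟩
      · exact ⟨q, Or.inr ⟨hq, by rw [hCq]⟩, by rw [hCq]⟩
    · rintro ⟨k, hk | hk, hki⟩
      · left
        rw [← hk.1]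
        rw [Prod.ext_iff]
        exact ⟨hki, by rw [hk.2, hki]⟩
      · right
        refine ⟨k, hk.1, ?_⟩
        rw [Prod.ext_iff]
        exact ⟨hki, by rw [hk.2, hki]⟩
  have hcol : colsum (wVec C) (zpt r c) j = ((Finset.univ.filter Q).card : ℝ) := by
    rw [colsum]
    have h1 : ∀ i : Fin m, (∑ k, ∑ l, wVec C i j k l * zpt r c i j k l)
        = wVec C i j (c j) (r i) := by
      intro i
      simp [zpt, mul_ite, ite_and, Finset.sum_ite_eq']
    rw [Finset.sum_congr rfl fun i _ => h1 i, Finset.sum_congr rfl fun i _ => hw i]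
    rw [Finset.sum_boole]
    rw [Finset.filter_mem_eq_inter, Finset.univ_inter]
    rw [Finset.card_image_of_injective _ (hdist j)]
  have hQiff : (∀ k, Q k) ↔
      (LitTrue u (C j (c j)) ∧ ∀ k, k ≠ c j → ¬ LitTrue u (C j k)) := by
    constructor
    · intro h
      constructor
      · rcases h (c j) with ⟨_, h2⟩ | ⟨h1, _⟩
        · exact (hlit _).2 h2
        · exact absurd rfl h1
      · intro k hk hT
        rcases h k with ⟨h1, _⟩ | ⟨_, h2⟩
        · exact hk h1
        · exact ((flipne _ _).1 h2) ((hlit _).1 hT)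
    · rintro ⟨h1, h2⟩ k
      by_cases hk : k = c j
      · subst hk
        exact Or.inl ⟨rfl, (hlit _).1 h1⟩
      · exact Or.inr ⟨hk, (flipne _ _).2 (fun hc => h2 k hk ((hlit _).2 hc))⟩
  constructor
  · rw [hcol]
    have : (Finset.univ.filter Q).card ≤ 3 := by
      calc (Finset.univ.filter Q).card ≤ (Finset.univ : Finset (Fin 3)).card :=
            Finset.card_filter_le _ _
        _ = 3 := by simp
    exact_mod_cast this
  · rw [hcol, ← hQiff]
    constructor
    · intro h
      have hc3 : (Finset.univ.filter Q).card = 3 := by exact_mod_cast h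
      have : Finset.univ.filter Q = (Finset.univ : Finset (Fin 3)) :=
        Finset.eq_univ_of_card _ (by simpa using hc3)
      intro k
      have := Finset.eq_univ_iff_forall.1 this k
      simpa using (Finset.mem_filter.1 this).2
    · intro h
      have : Finset.univ.filter Q = (Finset.univ : Finset (Fin 3)) :=
        Finset.filter_true_of_mem (fun k _ => h k)
      rw [this]
      simp
end

section
/- Let z = z(r,c) be an integral point of SATP_LP(m,n) and u the associated truth assignment (u_i = 1 − r_i). Then for every j ∈ {1,…,n}, the column sum ∑_{i,k,s} y^{k,s}_{i,j} · z^{k,s}_{i,j} is at most 3, and it equals 3 if and only if the literal of clause C_j at position c_j + 1 is made true by u and the literal at the cyclically preceding position (position p with (p mod 3) + 1 = c_j + 1) is made false by u; in particular, this column sum equals 3 for some choice of c_j ∈ {0,1,2} if and only if C_j has at least one true and at least one false literal under u. -/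
open Finset

/-- The NAE-3SAT objective vector y: if clause C_j has literal (i,s) at place k then
y^{k,s}_{i,j} = 1, y^{k+1,3-s}_{i,j} = 1 and y^{k+2,1}_{i,j} = y^{k+2,2}_{i,j} = 1
(places cyclically mod 3); all other coordinates are 0. Equivalently, position q gets a 1
at (i,s) from its own literal, at (i, flip s) from the literal at place q-1, and at
(i, both signs) from the literal at place q+1. -/
def yVec {m n : ℕ} (C : Fin n → Clause m) : Pt m n :=
  fun i j q s =>
    if C j q = (i, s) ∨ C j (q - 1) = (i, flipSign s) ∨ (C j (q + 1)).1 = i then 1 else 0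

lemma fin3cases : ∀ a : Fin 3, a = 0 ∨ a = 1 ∨ a = 2 := by decide
lemma fin2cases_s8 : ∀ a : Fin 2, a = 0 ∨ a = 1 := by decide

lemma colsum_eval {m n : ℕ} (C : Fin n → Clause m)
    (hdist : ∀ j, Function.Injective fun k => (C j k).1)
    (r : Fin m → Fin 2) (c : Fin n → Fin 3) (j : Fin n) :
    colsum (yVec C) (zpt r c) j =
      (if (C j (c j)).2 = r ((C j (c j)).1) then 1 else 0) +
      (if (C j (c j - 1)).2 = flipSign (r ((C j (c j - 1)).1)) then 1 else 0) + 1 := by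
  set q := c j with hq
  set a := (C j q).1 with ha
  set b := (C j (q - 1)).1 with hb
  set d := (C j (q + 1)).1 with hd
  have hq1 : q - 1 ≠ q := (by decide : ∀ t : Fin 3, t - 1 ≠ t) q
  have hq2 : q + 1 ≠ q := (by decide : ∀ t : Fin 3, t + 1 ≠ t) q
  have hq3 : q + 1 ≠ q - 1 := (by decide : ∀ t : Fin 3, t + 1 ≠ t - 1) q
  have hba : b ≠ a := fun h => hq1 (hdist j h)
  have hda : d ≠ a := fun h => hq2 (hdist j h)
  have hdb : d ≠ b := fun h => hq3 (hdist j h)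
  have h1 : ∀ i, (∑ k, ∑ l, yVec C i j k l * zpt r c i j k l) = yVec C i j q (r i) := by
    intro i
    rcases fin3cases q with h | h | h <;> rcases fin2cases_s8 (r i) with h' | h' <;>
      simp [zpt, ← hq, h, h', Fin.sum_univ_three, Fin.sum_univ_two]
  rw [colsum]
  simp only [h1]
  have hout : ∀ i ∈ (univ : Finset (Fin m)), i ∉ ({a, b, d} : Finset (Fin m)) →
      yVec C i j q (r i) = 0 := by
    intro i _ hi
    simp only [Finset.mem_insert, Finset.mem_singleton, not_or] at hi
    rw [yVec, if_neg]
    rintro (h | h | h)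
    · exact hi.1 (congrArg Prod.fst h).symm
    · exact hi.2.1 (congrArg Prod.fst h).symm
    · exact hi.2.2 h.symm
  rw [← Finset.sum_subset (Finset.subset_univ ({a, b, d} : Finset (Fin m))) hout]
  rw [Finset.sum_insert (by simp [hba.symm, hda.symm]),
      Finset.sum_insert (by simp [hdb.symm]), Finset.sum_singleton]
  have hfa : yVec C a j q (r a) = if (C j q).2 = r a then 1 else 0 := by
    rw [yVec]
    by_cases h : (C j q).2 = r a
    · have he : C j q = (a, r a) := Prod.ext_iff.mpr ⟨ha.symm, h⟩
      rw [if_pos (Or.inl he), if_pos h]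
    · rw [if_neg, if_neg h]
      rintro (h2 | h2 | h2)
      · exact h (Prod.ext_iff.mp h2).2
      · exact hba (Prod.ext_iff.mp h2).1
      · exact hda h2
  have hfb : yVec C b j q (r b) = if (C j (q-1)).2 = flipSign (r b) then 1 else 0 := by
    rw [yVec]
    by_cases h : (C j (q-1)).2 = flipSign (r b)
    · have he : C j (q - 1) = (b, flipSign (r b)) := Prod.ext_iff.mpr ⟨hb.symm, h⟩
      rw [if_pos (Or.inr (Or.inl he)), if_pos h]
    · rw [if_neg, if_neg h]
      rintro (h2 | h2 | h2)
      · exact hba.symm (Prod.ext_iff.mp h2).1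
      · exact h (Prod.ext_iff.mp h2).2
      · exact hdb h2
  have hfd : yVec C d j q (r d) = 1 := by
    rw [yVec, if_pos (Or.inr (Or.inr hd.symm))]
  rw [hfa, hfb, hfd]
  ring

lemma eq3_iff (A B : Prop) [Decidable A] [Decidable B] :
    ((if A then (1:ℝ) else 0) + (if B then 1 else 0) + 1) = 3 ↔ A ∧ B := by
  split_ifs <;> norm_num <;> tauto

lemma cyc (g : Fin 3 → Bool) :
    (∃ q : Fin 3, g q = true ∧ g (q - 1) = false) ↔
      ((∃ k, g k = true) ∧ (∃ k, g k = false)) := by revert g; decide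


/-- for z = z(r,c) and the associated truth assignment u (u_i = 1 - r_i),
every column sum of y·z is at most 3; it equals 3 iff the literal of C_j at position
c_j + 1 is true under u and the literal at the cyclically preceding position is false
under u; in particular the j-th column sum equals 3 for some choice of c_j iff C_j has
at least one true and at least one false literal under u. -/
theorem stmt8 (m n : ℕ) (C : Fin n → Clause m)
    (hdist : ∀ j, Function.Injective fun k => (C j k).1)
    (r : Fin m → Fin 2) (c : Fin n → Fin 3)
    (u : Fin m → Fin 2) (hu : ∀ i, u i = flipSign (r i)) (j : Fin n) :
    colsum (yVec C) (zpt r c) j ≤ 3 ∧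
    (colsum (yVec C) (zpt r c) j = 3 ↔
      (LitTrue u (C j (c j)) ∧ ¬ LitTrue u (C j (c j - 1)))) ∧
    ((∃ q : Fin 3, colsum (yVec C) (zpt r (Function.update c j q)) j = 3) ↔
      ((∃ k, LitTrue u (C j k)) ∧ (∃ k, ¬ LitTrue u (C j k)))) := by
  have hlit : ∀ lit : Fin m × Fin 2, LitTrue u lit ↔ lit.2 = r lit.1 := by
    intro lit
    rcases fin2cases_s8 lit.2 with hs | hs <;> rcases fin2cases_s8 (r lit.1) with hr | hr <;>
      simp [LitTrue, hs, hr, hu lit.1, flipSign]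
  have hnlit : ∀ lit : Fin m × Fin 2, ¬ LitTrue u lit ↔ lit.2 = flipSign (r lit.1) := by
    intro lit
    rw [hlit]
    exact (by decide : ∀ s t : Fin 2, (¬ s = t) ↔ s = flipSign t) _ _
  have heval : ∀ c' : Fin n → Fin 3, colsum (yVec C) (zpt r c') j =
      (if (C j (c' j)).2 = r ((C j (c' j)).1) then 1 else 0) +
      (if (C j (c' j - 1)).2 = flipSign (r ((C j (c' j - 1)).1)) then 1 else 0) + 1 :=
    fun c' => colsum_eval C hdist r c' j
  refine ⟨?_, ?_, ?_⟩
  · rw [heval]; split_ifs <;> norm_num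
  · rw [heval, eq3_iff, hlit, hnlit]
  · set g : Fin 3 → Bool := fun k => decide ((C j k).2 = r ((C j k).1)) with hgdef
    have hg : ∀ k, LitTrue u (C j k) ↔ g k = true := by
      intro k; rw [hlit]; simp [hgdef]
    have hgf : ∀ k, (¬ LitTrue u (C j k)) ↔ g k = false := by
      intro k; rw [hg]; simp
    have hcol : ∀ q : Fin 3,
        colsum (yVec C) (zpt r (Function.update c j q)) j = 3 ↔
          (g q = true ∧ g (q - 1) = false) := by
      intro q
      rw [heval, eq3_iff]
      simp only [Function.update_self]
      rw [← hlit, ← hnlit, hg, hgf]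
    simp only [hcol, hgf, hg]
    simpa using cyc g
end

section
/- Suppose m ≥ 2 or n ≥ 2. Then there exist two distinct non-adjacent integral points of SATP_LP(m,n), and for any two distinct non-adjacent integral points u and v there exists an integral point adjacent to both u and v; hence the graph on the integral points of SATP_LP(m,n) with edges given by adjacency (the 1-skeleton of SATP(m,n)) has diameter exactly 2. If m = n = 1, then all 6 integral points are pairwise adjacent. -/
open Finset

/-- Two distinct integral points u, v of SATP_LP(m,n) are adjacent (as vertices of
SATP(m,n)) iff the segment [u,v] is disjoint from the convex hull of the remaining
integral points. -/
def IsAdjacent {m n : ℕ} (u v : Pt m n) : Prop :=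
  u ∈ IntPts m n ∧ v ∈ IntPts m n ∧ u ≠ v ∧
  segment ℝ u v ∩ convexHull ℝ (IntPts m n \ {u, v}) = ∅

namespace SATPaux

variable {m n : ℕ}

/-- The integral point associated with `κ : Fin n → Fin 3` and `μ : Fin m → Fin 2`. -/
def V (κ : Fin n → Fin 3) (μ : Fin m → Fin 2) : Pt m n :=
  fun i j k l => if κ j = k ∧ μ i = l then (1 : ℝ) else 0

lemma two01 : ∀ b : Fin 2, b = 0 ∨ b = 1 := by decide

lemma sum_pair (c : Fin 3 → Fin 2 → ℝ) (a : Fin 3) (b : Fin 2) :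
    ∑ k, ∑ l, (if a = k ∧ b = l then c k l else 0) = c a b := by
  have h1 : ∀ k : Fin 3, ∑ l, (if a = k ∧ b = l then c k l else 0)
      = if a = k then c k b else 0 := by
    intro k
    by_cases h : a = k <;> simp [h]
  rw [Finset.sum_congr rfl fun k _ => h1 k]
  simp

lemma V_mem (κ : Fin n → Fin 3) (μ : Fin m → Fin 2) : V κ μ ∈ IntPts m n := by
  refine ⟨⟨?_, ?_, ?_, ?_⟩, ?_⟩
  · intro i j
    have h := sum_pair (fun _ _ => (1 : ℝ)) (κ j) (μ i)
    simpa [V] using h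
  · intro i j t
    have e : ∀ j' : Fin n, ∑ k, V κ μ i j' k 0 = if μ i = 0 then 1 else 0 := by
      intro j'
      by_cases h : μ i = 0 <;> simp [V, h]
    rw [e j, e t]
  · intro k j i s
    have e : ∀ i' : Fin m, V κ μ i' j k 0 + V κ μ i' j k 1 = if κ j = k then 1 else 0 := by
      intro i'
      rcases two01 (μ i') with h | h <;> by_cases hk : κ j = k <;> simp [V, h, hk]
    rw [e i, e s]
  · intro i j k l
    unfold V; split <;> norm_num
  · intro i j k l
    unfold V; split <;> simp

lemma V_inj (hm : 0 < m) (hn : 0 < n) {κ κ' : Fin n → Fin 3} {μ μ' : Fin m → Fin 2}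
    (h : V κ μ = V (m := m) κ' μ') : κ = κ' ∧ μ = μ' := by
  constructor
  · funext j
    by_contra hne
    have h1 := congrFun (congrFun (congrFun (congrFun h ⟨0, hm⟩) j) (κ j)) (μ ⟨0, hm⟩)
    have hL : V κ μ ⟨0, hm⟩ j (κ j) (μ ⟨0, hm⟩) = 1 := if_pos ⟨rfl, rfl⟩
    have hR : V κ' μ' ⟨0, hm⟩ j (κ j) (μ ⟨0, hm⟩) = 0 :=
      if_neg (by rintro ⟨hc, -⟩; exact hne hc.symm)
    rw [hL, hR] at h1
    exact one_ne_zero h1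
  · funext i
    by_contra hne
    have h1 := congrFun (congrFun (congrFun (congrFun h i) ⟨0, hn⟩) (κ ⟨0, hn⟩)) (μ i)
    have hL : V κ μ i ⟨0, hn⟩ (κ ⟨0, hn⟩) (μ i) = 1 := if_pos ⟨rfl, rfl⟩
    have hR : V κ' μ' i ⟨0, hn⟩ (κ ⟨0, hn⟩) (μ i) = 0 :=
      if_neg (by rintro ⟨-, hc⟩; exact hne hc.symm)
    rw [hL, hR] at h1
    exact one_ne_zero h1

lemma unique_one {a : Fin 3 → Fin 2 → ℝ}
    (h1 : ∑ k, ∑ l, a k l = 1) (h01 : ∀ k l, a k l = 0 ∨ a k l = 1) :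
    ∃ k l, ∀ k' l', a k' l' = if k = k' ∧ l = l' then 1 else 0 := by
  classical
  have hs : ∑ p : Fin 3 × Fin 2, a p.1 p.2 = 1 := by
    rw [Fintype.sum_prod_type]; exact h1
  set s : Finset (Fin 3 × Fin 2) := Finset.univ.filter (fun p => a p.1 p.2 = 1) with hsdef
  have hterm : ∀ p ∈ Finset.univ (α := Fin 3 × Fin 2),
      a p.1 p.2 = if a p.1 p.2 = 1 then (1 : ℝ) else 0 := by
    intro p _
    rcases h01 p.1 p.2 with h | h <;> simp [h]
  have hcardR : ((s.card : ℝ)) = 1 := by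
    rw [← hs, Finset.sum_congr rfl hterm, ← Finset.sum_filter, ← hsdef]
    simp
  have hcard : s.card = 1 := by exact_mod_cast hcardR
  obtain ⟨p0, hp0⟩ := Finset.card_eq_one.mp hcard
  refine ⟨p0.1, p0.2, ?_⟩
  intro k' l'
  by_cases hp : p0.1 = k' ∧ p0.2 = l'
  · obtain ⟨hk, hl⟩ := hp
    rw [if_pos ⟨hk, hl⟩, ← hk, ← hl]
    have hmem : p0 ∈ s := hp0 ▸ Finset.mem_singleton_self p0
    rw [hsdef] at hmem
    exact (Finset.mem_filter.mp hmem).2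
  · rw [if_neg hp]
    rcases h01 k' l' with h | h
    · exact h
    · exfalso
      have hmem : (k', l') ∈ s := by
        rw [hsdef]; exact Finset.mem_filter.mpr ⟨Finset.mem_univ _, h⟩
      rw [hp0, Finset.mem_singleton] at hmem
      cases hmem
      exact hp ⟨rfl, rfl⟩

lemma exists_rep (hm : 0 < m) (hn : 0 < n) {x : Pt m n} (hx : x ∈ IntPts m n) :
    ∃ κ μ, x = V κ μ := by
  obtain ⟨⟨h1, h2, h3, -⟩, h01⟩ := hx
  have key : ∀ i j, ∃ k l, ∀ k' l', x i j k' l' = if k = k' ∧ l = l' then 1 else 0 :=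
    fun i j => unique_one (h1 i j) (h01 i j)
  choose K L hKL using key
  have hLj : ∀ i j t, L i j = L i t := by
    intro i j t
    have hj := h2 i j t
    have e1 : ∀ j' : Fin n, ∑ k, x i j' k 0 = if L i j' = 0 then 1 else 0 := by
      intro j'
      have hterm : ∀ k, x i j' k 0 = if K i j' = k ∧ L i j' = 0 then 1 else 0 :=
        fun k => hKL i j' k 0
      rw [Finset.sum_congr rfl fun k _ => hterm k]
      by_cases hL : L i j' = 0 <;> simp [hL]
    rw [e1 j, e1 t] at hj
    rcases two01 (L i j) with h | h <;> rcases two01 (L i t) with h' | h' <;>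
      simp [h, h'] at hj ⊢
  have hKi : ∀ i s j, K i j = K s j := by
    intro i s j
    have hk := h3 (K i j) j i s
    have e2 : ∀ i' : Fin m, x i' j (K i j) 0 + x i' j (K i j) 1
        = if K i' j = K i j then 1 else 0 := by
      intro i'
      rw [hKL i' j (K i j) 0, hKL i' j (K i j) 1]
      rcases two01 (L i' j) with h | h <;> by_cases hKe : K i' j = K i j <;>
        simp [h, hKe]
    rw [e2 i, e2 s] at hk
    simp only [if_pos rfl] at hk
    by_cases hKe : K s j = K i j
    · exact hKe.symm
    · rw [if_neg hKe] at hk; exact absurd hk one_ne_zero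
  refine ⟨fun j => K ⟨0, hm⟩ j, fun i => L i ⟨0, hn⟩, ?_⟩
  funext i j k l
  rw [hKL i j k l]
  show _ = if K ⟨0, hm⟩ j = k ∧ L i ⟨0, hn⟩ = l then (1:ℝ) else 0
  rw [hKi ⟨0, hm⟩ i j, hLj i ⟨0, hn⟩ j]



lemma sum_V (c : Fin 3 → Fin 2 → ℝ) (κ : Fin n → Fin 3) (μ : Fin m → Fin 2)
    (i : Fin m) (j : Fin n) :
    ∑ k, ∑ l, c k l * V κ μ i j k l = c (κ j) (μ i) := by
  have hterm : ∀ (k : Fin 3) (l : Fin 2),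
      c k l * V (m := m) κ μ i j k l = if κ j = k ∧ μ i = l then c k l else 0 := by
    intro k l
    simp only [V, mul_ite, mul_one, mul_zero]
  simp only [hterm]
  exact sum_pair c (κ j) (μ i)

/-- The linear functional given by coefficients `c`. -/
def lin (c : Fin m → Fin n → Fin 3 → Fin 2 → ℝ) (y : Pt m n) : ℝ :=
  ∑ i, ∑ j, ∑ k, ∑ l, c i j k l * y i j k l

lemma lin_V (c : Fin m → Fin n → Fin 3 → Fin 2 → ℝ) (κ : Fin n → Fin 3)
    (μ : Fin m → Fin 2) :
    lin c (V κ μ) = ∑ i, ∑ j, c i j (κ j) (μ i) :=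
  Finset.sum_congr rfl fun i _ => Finset.sum_congr rfl fun j _ => sum_V (c i j) κ μ i j

lemma lin_combo (c : Fin m → Fin n → Fin 3 → Fin 2 → ℝ) (a b : ℝ) (y z : Pt m n) :
    lin c (a • y + b • z) = a * lin c y + b * lin c z := by
  unfold lin
  have h : ∀ (i : Fin m) (j : Fin n) (k : Fin 3) (l : Fin 2),
      c i j k l * ((a • y + b • z) i j k l)
      = a * (c i j k l * y i j k l) + b * (c i j k l * z i j k l) := by
    intro i j k l
    simp only [Pi.add_apply, Pi.smul_apply, smul_eq_mul]
    ring
  simp only [h, Finset.sum_add_distrib, Finset.mul_sum]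

lemma hull_bound {c : Fin m → Fin n → Fin 3 → Fin 2 → ℝ} {b : ℝ} {S : Set (Pt m n)}
    (h : ∀ y ∈ S, lin c y ≤ b) : ∀ y ∈ convexHull ℝ S, lin c y ≤ b := by
  intro y hy
  have hconv : Convex ℝ {y : Pt m n | lin c y ≤ b} := by
    intro p hp q hq a a' ha ha' haa
    simp only [Set.mem_setOf_eq] at hp hq ⊢
    rw [lin_combo]
    calc a * lin c p + a' * lin c q ≤ a * b + a' * b :=
          add_le_add (mul_le_mul_of_nonneg_left hp ha) (mul_le_mul_of_nonneg_left hq ha')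
      _ = b := by rw [← add_mul, haa, one_mul]
  exact convexHull_min h hconv hy

lemma adj_core (hm : 0 < m) (hn : 0 < n) {κ κ' : Fin n → Fin 3} {μ μ' : Fin m → Fin 2}
    (hne : V κ μ ≠ V (m := m) κ' μ')
    (H : ∀ (κ'' : Fin n → Fin 3) (μ'' : Fin m → Fin 2),
        (∀ i j, (κ'' j = κ j ∧ μ'' i = μ i) ∨ (κ'' j = κ' j ∧ μ'' i = μ' i)) →
        (κ'' = κ ∧ μ'' = μ) ∨ (κ'' = κ' ∧ μ'' = μ')) :
    IsAdjacent (V κ μ) (V κ' μ') := by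
  classical
  refine ⟨V_mem κ μ, V_mem κ' μ', hne, ?_⟩
  rw [Set.eq_empty_iff_forall_notMem]
  rintro x ⟨hseg, hhull⟩
  set c : Fin m → Fin n → Fin 3 → Fin 2 → ℝ :=
    fun i j k l => if (κ j = k ∧ μ i = l) ∨ (κ' j = k ∧ μ' i = l) then 1 else 0 with hcdef
  have hone : ∑ i : Fin m, ∑ j : Fin n, (1 : ℝ) = (m : ℝ) * n := by
    simp [Finset.sum_const, Finset.card_univ, mul_comm]
  have hFu : lin c (V κ μ) = (m : ℝ) * n := by
    rw [lin_V, ← hone]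
    refine Finset.sum_congr rfl fun i _ => Finset.sum_congr rfl fun j _ => ?_
    simp [hcdef]
  have hFv : lin c (V κ' μ') = (m : ℝ) * n := by
    rw [lin_V, ← hone]
    refine Finset.sum_congr rfl fun i _ => Finset.sum_congr rfl fun j _ => ?_
    simp [hcdef]
  have hb : ∀ w ∈ IntPts m n \ {V κ μ, V (m := m) κ' μ'}, lin c w ≤ (m : ℝ) * n - 1 := by
    rintro w ⟨hwI, hw2⟩
    obtain ⟨κ'', μ'', rfl⟩ := exists_rep hm hn hwI
    simp only [Set.mem_insert_iff, Set.mem_singleton_iff, not_or] at hw2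
    obtain ⟨hwu, hwv⟩ := hw2
    have hnotall : ¬ ∀ i j, (κ'' j = κ j ∧ μ'' i = μ i) ∨ (κ'' j = κ' j ∧ μ'' i = μ' i) := by
      intro hall
      rcases H κ'' μ'' hall with ⟨rfl, rfl⟩ | ⟨rfl, rfl⟩
      exacts [hwu rfl, hwv rfl]
    obtain ⟨i0, hni⟩ := not_forall.mp hnotall
    obtain ⟨j0, hij⟩ := not_forall.mp hni
    have hc0 : c i0 j0 (κ'' j0) (μ'' i0) = 0 := by
      rw [hcdef]
      refine if_neg ?_
      rintro (⟨ha, hb⟩ | ⟨ha, hb⟩)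
      · exact hij (Or.inl ⟨ha.symm, hb.symm⟩)
      · exact hij (Or.inr ⟨ha.symm, hb.symm⟩)
    have hle : ∀ p : Fin m × Fin n, c p.1 p.2 (κ'' p.2) (μ'' p.1) ≤ 1 := by
      intro p
      rw [hcdef]
      dsimp only
      split <;> norm_num
    have hF : lin c (V κ'' μ'') = ∑ p : Fin m × Fin n, c p.1 p.2 (κ'' p.2) (μ'' p.1) := by
      rw [lin_V]
      exact (Fintype.sum_prod_type (fun p : Fin m × Fin n => c p.1 p.2 (κ'' p.2) (μ'' p.1))).symm
    rw [hF, ← Finset.add_sum_erase _ _ (Finset.mem_univ ((i0, j0) : Fin m × Fin n))]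
    have hsum : ∑ p ∈ Finset.univ.erase ((i0, j0) : Fin m × Fin n),
        c p.1 p.2 (κ'' p.2) (μ'' p.1)
        ≤ ((Finset.univ.erase ((i0, j0) : Fin m × Fin n)).card : ℝ) := by
      calc _ ≤ (Finset.univ.erase ((i0, j0) : Fin m × Fin n)).card • (1 : ℝ) :=
            Finset.sum_le_card_nsmul _ _ _ (fun p _ => hle p)
        _ = _ := by rw [nsmul_eq_mul, mul_one]
    have h1mn : 1 ≤ m * n := Nat.one_le_iff_ne_zero.mpr (Nat.mul_ne_zero hm.ne' hn.ne')
    have hcard : (Finset.univ.erase ((i0, j0) : Fin m × Fin n)).card = m * n - 1 := by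
      rw [Finset.card_erase_of_mem (Finset.mem_univ _), Finset.card_univ]
      simp
    rw [hcard, Nat.cast_sub h1mn] at hsum
    push_cast at hsum
    have hc0' : c (i0, j0).1 (i0, j0).2 (κ'' (i0, j0).2) (μ'' (i0, j0).1) = 0 := hc0
    rw [hc0']
    linarith
  obtain ⟨a, b', ha, hb', hab, hx⟩ := hseg
  have hFx : lin c x = (m : ℝ) * n := by
    rw [← hx, lin_combo, hFu, hFv]
    linear_combination ((m : ℝ) * n) * hab
  have hxb := hull_bound hb x hhull
  rw [hFx] at hxb
  linarith



lemma H_both {κ κ' : Fin n → Fin 3} {μ μ' : Fin m → Fin 2} (j0 : Fin n) (i0 : Fin m)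
    (hκ : κ j0 ≠ κ' j0) (hμ : μ i0 ≠ μ' i0) :
    ∀ (κ'' : Fin n → Fin 3) (μ'' : Fin m → Fin 2),
      (∀ i j, (κ'' j = κ j ∧ μ'' i = μ i) ∨ (κ'' j = κ' j ∧ μ'' i = μ' i)) →
      (κ'' = κ ∧ μ'' = μ) ∨ (κ'' = κ' ∧ μ'' = μ') := by
  intro κ'' μ'' h
  rcases h i0 j0 with ⟨hk, hl⟩ | ⟨hk, hl⟩
  · left
    constructor
    · funext j
      rcases h i0 j with ⟨h1, -⟩ | ⟨-, h2⟩
      · exact h1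
      · exact absurd (hl.symm.trans h2) hμ
    · funext i
      rcases h i j0 with ⟨-, h2⟩ | ⟨h1, -⟩
      · exact h2
      · exact absurd (hk.symm.trans h1) hκ
  · right
    constructor
    · funext j
      rcases h i0 j with ⟨-, h2⟩ | ⟨h1, -⟩
      · exact absurd (h2.symm.trans hl) hμ
      · exact h1
    · funext i
      rcases h i j0 with ⟨h1, -⟩ | ⟨-, h2⟩
      · exact absurd (h1.symm.trans hk) hκ
      · exact h2

lemma H_one_lam (hn : 0 < n) {κ κ' : Fin n → Fin 3} {μ μ' : Fin m → Fin 2}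
    (i1 : Fin m) (hκ : κ = κ') (hrest : ∀ i, i ≠ i1 → μ i = μ' i) :
    ∀ (κ'' : Fin n → Fin 3) (μ'' : Fin m → Fin 2),
      (∀ i j, (κ'' j = κ j ∧ μ'' i = μ i) ∨ (κ'' j = κ' j ∧ μ'' i = μ' i)) →
      (κ'' = κ ∧ μ'' = μ) ∨ (κ'' = κ' ∧ μ'' = μ') := by
  subst hκ
  intro κ'' μ'' h
  have hκ'' : κ'' = κ := funext fun j => ((h i1 j).elim And.left And.left)
  rcases h i1 ⟨0, hn⟩ with ⟨-, hl⟩ | ⟨-, hl⟩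
  · left
    refine ⟨hκ'', funext fun i => ?_⟩
    by_cases hi : i = i1
    · subst hi; exact hl
    · rcases h i ⟨0, hn⟩ with ⟨-, h2⟩ | ⟨-, h2⟩
      · exact h2
      · exact h2.trans (hrest i hi).symm
  · right
    refine ⟨hκ'', funext fun i => ?_⟩
    by_cases hi : i = i1
    · subst hi; exact hl
    · rcases h i ⟨0, hn⟩ with ⟨-, h2⟩ | ⟨-, h2⟩
      · exact h2.trans (hrest i hi)
      · exact h2

lemma H_one_kappa (hm : 0 < m) {κ κ' : Fin n → Fin 3} {μ μ' : Fin m → Fin 2}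
    (j1 : Fin n) (hμ : μ = μ') (hrest : ∀ j, j ≠ j1 → κ j = κ' j) :
    ∀ (κ'' : Fin n → Fin 3) (μ'' : Fin m → Fin 2),
      (∀ i j, (κ'' j = κ j ∧ μ'' i = μ i) ∨ (κ'' j = κ' j ∧ μ'' i = μ' i)) →
      (κ'' = κ ∧ μ'' = μ) ∨ (κ'' = κ' ∧ μ'' = μ') := by
  subst hμ
  intro κ'' μ'' h
  have hμ'' : μ'' = μ := funext fun i => ((h i j1).elim And.right And.right)
  rcases h ⟨0, hm⟩ j1 with ⟨hk, -⟩ | ⟨hk, -⟩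
  · left
    refine ⟨funext fun j => ?_, hμ''⟩
    by_cases hj : j = j1
    · subst hj; exact hk
    · rcases h ⟨0, hm⟩ j with ⟨h2, -⟩ | ⟨h2, -⟩
      · exact h2
      · exact h2.trans (hrest j hj).symm
  · right
    refine ⟨funext fun j => ?_, hμ''⟩
    by_cases hj : j = j1
    · subst hj; exact hk
    · rcases h ⟨0, hm⟩ j with ⟨h2, -⟩ | ⟨h2, -⟩
      · exact h2.trans (hrest j hj)
      · exact h2

lemma nonadj_lam (hm : 0 < m) (hn : 0 < n) (κ : Fin n → Fin 3) (μ μ' : Fin m → Fin 2)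
    (i1 i2 : Fin m) (h12 : i1 ≠ i2) (d1 : μ i1 ≠ μ' i1) (d2 : μ i2 ≠ μ' i2) :
    ¬ IsAdjacent (V κ μ) (V κ μ') := by
  classical
  rintro ⟨-, -, -, hdisj⟩
  set μ1 := Function.update μ i1 (μ' i1) with hμ1
  set μ2 := Function.update μ' i1 (μ i1) with hμ2
  have hkey : (1/2 : ℝ) • V κ μ + (1/2 : ℝ) • V κ μ' =
      (1/2 : ℝ) • V (m := m) κ μ1 + (1/2 : ℝ) • V κ μ2 := by
    funext i j k l
    simp only [Pi.add_apply, Pi.smul_apply, smul_eq_mul]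
    by_cases h : i = i1
    · subst h
      simp only [V, hμ1, hμ2, Function.update_self]
      ring
    · simp only [V, hμ1, hμ2, Function.update_of_ne h]
  have hmid : (1/2 : ℝ) • V κ μ + (1/2 : ℝ) • V κ μ' ∈
      segment ℝ (V (m := m) κ μ) (V κ μ') :=
    ⟨1/2, 1/2, by norm_num, by norm_num, by norm_num, rfl⟩
  have hw1 : V (m := m) κ μ1 ∈ IntPts m n \ {V κ μ, V κ μ'} := by
    refine ⟨V_mem _ _, ?_⟩
    simp only [Set.mem_insert_iff, Set.mem_singleton_iff, not_or]
    constructor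
    · intro he
      have h := congrFun (V_inj hm hn he).2 i1
      rw [hμ1, Function.update_self] at h
      exact d1 h.symm
    · intro he
      have h := congrFun (V_inj hm hn he).2 i2
      rw [hμ1, Function.update_of_ne (Ne.symm h12)] at h
      exact d2 h
  have hw2 : V (m := m) κ μ2 ∈ IntPts m n \ {V κ μ, V κ μ'} := by
    refine ⟨V_mem _ _, ?_⟩
    simp only [Set.mem_insert_iff, Set.mem_singleton_iff, not_or]
    constructor
    · intro he
      have h := congrFun (V_inj hm hn he).2 i2
      rw [hμ2, Function.update_of_ne (Ne.symm h12)] at h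
      exact d2 h.symm
    · intro he
      have h := congrFun (V_inj hm hn he).2 i1
      rw [hμ2, Function.update_self] at h
      exact d1 h
  have hhull : (1/2 : ℝ) • V κ μ + (1/2 : ℝ) • V κ μ' ∈
      convexHull ℝ (IntPts m n \ {V (m := m) κ μ, V κ μ'}) := by
    rw [hkey]
    exact (convex_convexHull ℝ _) (subset_convexHull ℝ _ hw1) (subset_convexHull ℝ _ hw2)
      (by norm_num) (by norm_num) (by norm_num)
  exact Set.eq_empty_iff_forall_notMem.mp hdisj _ ⟨hmid, hhull⟩

lemma nonadj_kappa (hm : 0 < m) (hn : 0 < n) (κ κ' : Fin n → Fin 3) (μ : Fin m → Fin 2)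
    (j1 j2 : Fin n) (h12 : j1 ≠ j2) (d1 : κ j1 ≠ κ' j1) (d2 : κ j2 ≠ κ' j2) :
    ¬ IsAdjacent (V κ μ) (V κ' μ) := by
  classical
  rintro ⟨-, -, -, hdisj⟩
  set κ1 := Function.update κ j1 (κ' j1) with hκ1
  set κ2 := Function.update κ' j1 (κ j1) with hκ2
  have hkey : (1/2 : ℝ) • V κ μ + (1/2 : ℝ) • V κ' μ =
      (1/2 : ℝ) • V (m := m) κ1 μ + (1/2 : ℝ) • V κ2 μ := by
    funext i j k l
    simp only [Pi.add_apply, Pi.smul_apply, smul_eq_mul]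
    by_cases h : j = j1
    · subst h
      simp only [V, hκ1, hκ2, Function.update_self]
      ring
    · simp only [V, hκ1, hκ2, Function.update_of_ne h]
  have hmid : (1/2 : ℝ) • V κ μ + (1/2 : ℝ) • V κ' μ ∈
      segment ℝ (V (m := m) κ μ) (V κ' μ) :=
    ⟨1/2, 1/2, by norm_num, by norm_num, by norm_num, rfl⟩
  have hw1 : V (m := m) κ1 μ ∈ IntPts m n \ {V κ μ, V κ' μ} := by
    refine ⟨V_mem _ _, ?_⟩
    simp only [Set.mem_insert_iff, Set.mem_singleton_iff, not_or]
    constructor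
    · intro he
      have h := congrFun (V_inj hm hn he).1 j1
      rw [hκ1, Function.update_self] at h
      exact d1 h.symm
    · intro he
      have h := congrFun (V_inj hm hn he).1 j2
      rw [hκ1, Function.update_of_ne (Ne.symm h12)] at h
      exact d2 h
  have hw2 : V (m := m) κ2 μ ∈ IntPts m n \ {V κ μ, V κ' μ} := by
    refine ⟨V_mem _ _, ?_⟩
    simp only [Set.mem_insert_iff, Set.mem_singleton_iff, not_or]
    constructor
    · intro he
      have h := congrFun (V_inj hm hn he).1 j2
      rw [hκ2, Function.update_of_ne (Ne.symm h12)] at h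
      exact d2 h.symm
    · intro he
      have h := congrFun (V_inj hm hn he).1 j1
      rw [hκ2, Function.update_self] at h
      exact d1 h
  have hhull : (1/2 : ℝ) • V κ μ + (1/2 : ℝ) • V κ' μ ∈
      convexHull ℝ (IntPts m n \ {V (m := m) κ μ, V κ' μ}) := by
    rw [hkey]
    exact (convex_convexHull ℝ _) (subset_convexHull ℝ _ hw1) (subset_convexHull ℝ _ hw2)
      (by norm_num) (by norm_num) (by norm_num)
  exact Set.eq_empty_iff_forall_notMem.mp hdisj _ ⟨hmid, hhull⟩

lemma fin3_add_one_ne : ∀ a : Fin 3, a + 1 ≠ a := by decide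
lemma fin2_add_one_ne : ∀ a : Fin 2, a + 1 ≠ a := by decide

end SATPaux

open SATPaux

/-- if m ≥ 2 or n ≥ 2 then there exist two distinct non-adjacent integral
points, and any two distinct non-adjacent integral points have a common neighbour
(hence the 1-skeleton of SATP(m,n) has diameter exactly 2); if m = n = 1 then all 6
integral points are pairwise adjacent. -/
theorem stmt10 (m n : ℕ) (hm : 0 < m) (hn : 0 < n) :
    ((2 ≤ m ∨ 2 ≤ n) →
      ((∃ u ∈ IntPts m n, ∃ v ∈ IntPts m n, u ≠ v ∧ ¬ IsAdjacent u v) ∧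
       (∀ u ∈ IntPts m n, ∀ v ∈ IntPts m n, u ≠ v → ¬ IsAdjacent u v →
          ∃ w ∈ IntPts m n, IsAdjacent w u ∧ IsAdjacent w v))) ∧
    (m = 1 ∧ n = 1 →
      (Nat.card (IntPts m n) = 6 ∧
       ∀ u ∈ IntPts m n, ∀ v ∈ IntPts m n, u ≠ v → IsAdjacent u v)) := by
  constructor
  · intro hmn
    constructor
    · -- existence of a non-adjacent pair
      rcases hmn with hm2 | hn2
      · set i1 : Fin m := ⟨0, hm⟩ with hi1
        set i2 : Fin m := ⟨1, hm2⟩ with hi2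
        have h12 : i1 ≠ i2 := by simp [hi1, hi2, Fin.ext_iff]
        set κ : Fin n → Fin 3 := fun _ => 0 with hκ
        set μ : Fin m → Fin 2 := fun _ => 0 with hμ
        set μ' : Fin m → Fin 2 := fun i => if i = i1 ∨ i = i2 then 1 else 0 with hμ'
        have d1 : μ i1 ≠ μ' i1 := by simp [hμ, hμ']
        have d2 : μ i2 ≠ μ' i2 := by simp [hμ, hμ']
        refine ⟨V κ μ, V_mem κ μ, V κ μ', V_mem κ μ', ?_,
          nonadj_lam hm hn κ μ μ' i1 i2 h12 d1 d2⟩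
        intro he
        exact d1 (congrFun (V_inj hm hn he).2 i1)
      · set j1 : Fin n := ⟨0, hn⟩ with hj1
        set j2 : Fin n := ⟨1, hn2⟩ with hj2
        have h12 : j1 ≠ j2 := by simp [hj1, hj2, Fin.ext_iff]
        set κ : Fin n → Fin 3 := fun _ => 0 with hκ
        set κ' : Fin n → Fin 3 := fun j => if j = j1 ∨ j = j2 then 1 else 0 with hκ'
        set μ : Fin m → Fin 2 := fun _ => 0 with hμ
        have d1 : κ j1 ≠ κ' j1 := by simp [hκ, hκ']
        have d2 : κ j2 ≠ κ' j2 := by simp [hκ, hκ']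
        refine ⟨V κ μ, V_mem κ μ, V κ' μ, V_mem κ' μ, ?_,
          nonadj_kappa hm hn κ κ' μ j1 j2 h12 d1 d2⟩
        intro he
        exact d1 (congrFun (V_inj hm hn he).1 j1)
    · -- common neighbour
      intro u hu v hv huv hnadj
      obtain ⟨κ, μ, rfl⟩ := exists_rep hm hn hu
      obtain ⟨κ', μ', rfl⟩ := exists_rep hm hn hv
      have hsplit : κ = κ' ∨ μ = μ' := by
        by_contra hc
        push_neg at hc
        obtain ⟨hκ, hμ⟩ := hc
        obtain ⟨j0, hj0⟩ := Function.ne_iff.mp hκ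
        obtain ⟨i0, hi0⟩ := Function.ne_iff.mp hμ
        exact hnadj (adj_core hm hn huv (H_both j0 i0 hj0 hi0))
      rcases hsplit with rfl | rfl
      · -- same κ, μ ≠ μ'
        have hμne : μ ≠ μ' := fun h => huv (by rw [h])
        obtain ⟨i1, hi1⟩ := Function.ne_iff.mp hμne
        have h2 : ∃ i2, i2 ≠ i1 ∧ μ i2 ≠ μ' i2 := by
          by_contra hc
          push_neg at hc
          exact hnadj (adj_core hm hn huv (H_one_lam hn i1 rfl hc))
        obtain ⟨i2, h21, hi2⟩ := h2
        set j0 : Fin n := ⟨0, hn⟩ with hj0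
        set κ'' := Function.update κ j0 (κ j0 + 1) with hκ''
        set μ'' := Function.update μ i1 (μ' i1) with hμ''
        have hk0 : κ'' j0 ≠ κ j0 := by
          rw [hκ'', Function.update_self]
          exact fin3_add_one_ne (κ j0)
        have hm1 : μ'' i1 ≠ μ i1 := by
          rw [hμ'', Function.update_self]
          exact fun h => hi1 h.symm
        have hm2' : μ'' i2 ≠ μ' i2 := by
          rw [hμ'', Function.update_of_ne h21]
          exact hi2
        refine ⟨V κ'' μ'', V_mem _ _,
          adj_core hm hn ?_ (H_both j0 i1 hk0 hm1),
          adj_core hm hn ?_ (H_both j0 i2 hk0 hm2')⟩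
        · intro he
          exact hk0 (congrFun (V_inj hm hn he).1 j0)
        · intro he
          exact hk0 (congrFun (V_inj hm hn he).1 j0)
      · -- same μ, κ ≠ κ'
        have hκne : κ ≠ κ' := fun h => huv (by rw [h])
        obtain ⟨j1, hj1⟩ := Function.ne_iff.mp hκne
        have h2 : ∃ j2, j2 ≠ j1 ∧ κ j2 ≠ κ' j2 := by
          by_contra hc
          push_neg at hc
          exact hnadj (adj_core hm hn huv (H_one_kappa hm j1 rfl hc))
        obtain ⟨j2, h21, hj2⟩ := h2
        set i0 : Fin m := ⟨0, hm⟩ with hi0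
        set μ'' := Function.update μ i0 (μ i0 + 1) with hμ''
        set κ'' := Function.update κ j1 (κ' j1) with hκ''
        have hl0 : μ'' i0 ≠ μ i0 := by
          rw [hμ'', Function.update_self]
          exact fin2_add_one_ne (μ i0)
        have hk1 : κ'' j1 ≠ κ j1 := by
          rw [hκ'', Function.update_self]
          exact fun h => hj1 h.symm
        have hk2 : κ'' j2 ≠ κ' j2 := by
          rw [hκ'', Function.update_of_ne h21]
          exact hj2
        refine ⟨V κ'' μ'', V_mem _ _,
          adj_core hm hn ?_ (H_both j1 i0 hk1 hl0),
          adj_core hm hn ?_ (H_both j2 i0 hk2 hl0)⟩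
        · intro he
          exact hl0 (congrFun (V_inj hm hn he).2 i0)
        · intro he
          exact hl0 (congrFun (V_inj hm hn he).2 i0)
  · rintro ⟨rfl, rfl⟩
    constructor
    · -- Nat.card = 6
      have himg : IntPts 1 1
          = Set.range (fun p : Fin 3 × Fin 2 => V (fun _ => p.1) (fun _ => p.2)) := by
        ext x
        constructor
        · intro hx
          obtain ⟨κ, μ, rfl⟩ := exists_rep one_pos one_pos hx
          refine ⟨(κ 0, μ 0), ?_⟩
          have hκ : (fun _ : Fin 1 => κ 0) = κ :=
            funext fun j => by rw [Subsingleton.elim j 0]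
          have hμ : (fun _ : Fin 1 => μ 0) = μ :=
            funext fun i => by rw [Subsingleton.elim i 0]
          simp only [hκ, hμ]
        · rintro ⟨p, rfl⟩
          exact V_mem _ _
      have hinj : Function.Injective
          (fun p : Fin 3 × Fin 2 => V (m := 1) (n := 1) (fun _ => p.1) (fun _ => p.2)) := by
        intro p q h
        obtain ⟨hκ, hμ⟩ := V_inj one_pos one_pos h
        exact Prod.ext (congrFun hκ 0) (congrFun hμ 0)
      rw [himg, Nat.card_range_of_injective hinj]
      simp [Nat.card_eq_fintype_card]
    · intro u hu v hv huv
      obtain ⟨κ, μ, rfl⟩ := exists_rep one_pos one_pos hu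
      obtain ⟨κ', μ', rfl⟩ := exists_rep one_pos one_pos hv
      by_cases hκ : κ 0 = κ' 0
      · have hκe : κ = κ' := funext fun j => by
          rw [Subsingleton.elim j 0]; exact hκ
        subst hκe
        exact adj_core one_pos one_pos huv
          (H_one_lam one_pos 0 rfl fun i hi => absurd (Subsingleton.elim i 0) hi)
      · by_cases hμ : μ 0 = μ' 0
        · have hμe : μ = μ' := funext fun i => by
            rw [Subsingleton.elim i 0]; exact hμ
          subst hμe
          exact adj_core one_pos one_pos huv
            (H_one_kappa one_pos 0 rfl fun j hj => absurd (Subsingleton.elim j 0) hj)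
        · exact adj_core one_pos one_pos huv (H_both 0 0 hκ hμ)
end

section
/- For every integer n ≥ 4, the polytope SATP_LP(n,n) has an extreme point x all of whose coordinates are integer multiples of 1/(n+1) and at least one of whose coordinates equals 1/(n+1); in particular, SATP_LP(n,n) has fractional vertices with denominator n+1. -/
open Finset

def Zn (n i j k : ℕ) : ℕ :=
  if k = 0 then (if (i = 0 ∧ 1 ≤ j) ∨ (i = n-2 ∧ j = 0) then 0 else min i j + 1)
  else if k = 1 then (if i = j+1 ∨ (i = 0 ∧ 1 ≤ j) then 1 else 0)
  else if i = n-2 ∧ j = 0 then n-1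
  else if i = j+1 ∨ (i = 0 ∧ 1 ≤ j) then 0 else i - min i j

def Yn (n j k : ℕ) : ℕ := if k = 0 then j+1 else if k = 1 then 1 else n-1-j

lemma cellA (n j : ℕ) (hn : 4 ≤ n) (hj : j < n) :
    Zn n j j 1 = 0 ∧ Zn n j j 2 = 0 ∧ Zn n j j 0 = Yn n j 0 := by
  unfold Zn Yn; norm_num; try omega

lemma cellC (n j : ℕ) (hn : 4 ≤ n) (hj1 : 1 ≤ j) (hj : j < n) :
    Zn n 0 j 0 = 0 ∧ Zn n 0 j 2 = 0 ∧ Zn n 0 j 1 = Yn n j 1 := by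
  unfold Zn Yn; norm_num; try omega

lemma cellB (n j : ℕ) (hn : 4 ≤ n) (hj : j + 1 < n) :
    Zn n (j+1) j 0 = Yn n j 0 ∧ Zn n (j+1) j 1 = Yn n j 1 ∧ Zn n (j+1) j 2 = 0 := by
  unfold Zn Yn; norm_num; try omega

lemma cellD (n : ℕ) (hn : 4 ≤ n) :
    Zn n (n-2) 0 0 = 0 ∧ Zn n (n-2) 0 1 = 0 ∧ Zn n (n-2) 0 2 = Yn n 0 2 := by
  unfold Zn Yn; norm_num; try omega

lemma cellN1 (n : ℕ) (hn : 4 ≤ n) :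
    Zn n (n-1) 0 0 = Yn n 0 0 ∧ Zn n (n-1) 0 1 = 0 ∧ Zn n (n-1) 0 2 = Yn n 0 2 := by
  unfold Zn Yn; norm_num; try omega

lemma cellN (n : ℕ) (hn : 4 ≤ n) :
    Zn n 0 (n-1) 2 = 0 ∧ Zn n 0 (n-1) 2 = Yn n (n-1) 2 := by
  unfold Zn Yn; norm_num; try omega

lemma zsplit1 (n i j : ℕ) (hn : 4 ≤ n) (hi : i < n) (hj : j < n) :
    Zn n i j 1 = 0 ∨ Zn n i j 1 = Yn n j 1 := by
  unfold Zn Yn; norm_num; try omega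

lemma zsplit2 (n i j : ℕ) (hn : 4 ≤ n) (hi : i < n) (hj : j < n) :
    Zn n i j 0 = 0 ∨ Zn n i j 0 = Yn n j 0 ∨ Zn n i j 2 = 0 ∨ Zn n i j 2 = Yn n j 2 := by
  unfold Zn Yn; norm_num; split_ifs <;> omega

/-- The abstract linear algebra: the homogeneous system forces everything to vanish. -/
lemma linalg (n : ℕ) (hn : 4 ≤ n) (R Y0 Y1 Y2 : ℕ → ℝ)
    (hA : ∀ j, j < n → Y0 j = R j)
    (hC : ∀ j, 1 ≤ j → j < n → Y1 j = R 0)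
    (hB : ∀ j, j + 1 < n → R (j+1) = Y0 j + Y1 j)
    (hD : R (n-2) = Y2 0)
    (hN : Y2 (n-1) = 0)
    (hs : ∀ j, j < n → Y0 j + Y1 j + Y2 j = 0) :
    ∀ m, m < n → R m = 0 ∧ Y0 m = 0 ∧ Y1 m = 0 ∧ Y2 m = 0 := by
  have chain : ∀ m, m + 1 < n → R (m+1) = R 1 + (m : ℝ) * R 0 := by
    intro m
    induction m with
    | zero => intro h; push_cast; ring
    | succ m ih =>
      intro h
      have h1 := ih (by omega)
      have h2 := hB (m+1) h
      have h3 := hA (m+1) (by omega)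
      have h4 := hC (m+1) (by omega) (by omega)
      push_cast
      push_cast at h1
      linarith
  have e1 : R (n-1) = - R 0 := by
    have h1 := hs (n-1) (by omega)
    have h2 := hA (n-1) (by omega)
    have h3 := hC (n-1) (by omega) (by omega)
    linarith [hN]
  have e2 : Y1 0 = R 1 - R 0 := by
    have h1 := hB 0 (by omega)
    have h2 := hA 0 (by omega)
    norm_num at h1
    linarith
  have e3 : Y2 0 = - R 1 := by
    have h1 := hs 0 (by omega)
    have h2 := hA 0 (by omega)
    linarith
  have e4 : R (n-2) = - R 1 := by rw [hD, e3]
  have c1 : R (n-1) = R 1 + ((n-2 : ℕ) : ℝ) * R 0 := by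
    have := chain (n-2) (by omega)
    rwa [show n-2+1 = n-1 by omega] at this
  have c2 : R (n-2) = R 1 + ((n-3 : ℕ) : ℝ) * R 0 := by
    have := chain (n-3) (by omega)
    rwa [show n-3+1 = n-2 by omega] at this
  have hc2 : ((n-2 : ℕ) : ℝ) = (n : ℝ) - 2 := by
    rw [Nat.cast_sub (by omega : 2 ≤ n)]; norm_num
  have hc3 : ((n-3 : ℕ) : ℝ) = (n : ℝ) - 3 := by
    rw [Nat.cast_sub (by omega : 3 ≤ n)]; norm_num
  rw [hc2] at c1; rw [hc3] at c2
  have eqA : R 1 + ((n:ℝ) - 1) * R 0 = 0 := by rw [e1] at c1; linarith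
  have eqB : 2 * R 1 + ((n:ℝ) - 3) * R 0 = 0 := by rw [e4] at c2; linarith
  have key : ((n:ℝ) + 1) * R 0 = 0 := by linear_combination 2 * eqA - eqB
  have hne : ((n:ℝ) + 1) ≠ 0 := by positivity
  have R0 : R 0 = 0 := by
    rcases mul_eq_zero.mp key with h | h
    · exact absurd h hne
    · exact h
  have R1 : R 1 = 0 := by rw [R0] at eqA; linarith
  have Rall : ∀ m, m < n → R m = 0 := by
    intro m hm
    match m with
    | 0 => exact R0
    | (m+1) =>
      rw [chain m hm, R0, R1]; ring
  intro m hm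
  refine ⟨Rall m hm, ?_, ?_, ?_⟩
  · rw [hA m hm, Rall m hm]
  · match m with
    | 0 => rw [e2, R0, R1]; ring
    | (m+1) => rw [hC (m+1) (by omega) hm, R0]
  · have := hs m hm
    have h2 := hA m hm
    have h3 : Y1 m = 0 := by
      match m with
      | 0 => rw [e2, R0, R1]; ring
      | (m+1) => rw [hC (m+1) (by omega) hm, R0]
    rw [Rall m hm] at h2
    linarith

noncomputable def xpt (n : ℕ) : Pt n n := fun i j k l =>
  (if l = 0 then (Zn n i j k : ℝ) else (Yn n j k : ℝ) - (Zn n i j k : ℝ)) / (n+1)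

lemma xpt_mem (n : ℕ) (hn : 4 ≤ n) : xpt n ∈ SATPLP n n := by
  have h1 : ((n:ℝ)+1) ≠ 0 := by positivity
  refine ⟨?_, ?_, ?_, ?_⟩
  · intro i j
    have hy : Yn n j 0 + Yn n j 1 + Yn n j 2 = n + 1 := by
      have := j.isLt; simp only [Yn]; norm_num; omega
    have e : ∑ k, ∑ l, xpt n i j k l = ((Yn n j 0 + Yn n j 1 + Yn n j 2 : ℕ) : ℝ)/(n+1) := by
      simp only [Fin.sum_univ_three, Fin.sum_univ_two, xpt]
      norm_num
      push_cast
      ring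
    rw [e, hy]
    push_cast
    field_simp
  · intro i j t
    have key : ∀ s : Fin n, ∑ k, xpt n i s k 0 = ((i:ℕ) + 1 : ℝ) / (n+1) := by
      intro s
      have hz : Zn n i s 0 + Zn n i s 1 + Zn n i s 2 = (i:ℕ) + 1 := by
        have := i.isLt; have := s.isLt; simp only [Zn]; norm_num; split_ifs <;> omega
      have e : ∑ k, xpt n i s k 0 = ((Zn n i s 0 + Zn n i s 1 + Zn n i s 2 : ℕ) : ℝ)/(n+1) := by
        simp only [Fin.sum_univ_three, xpt]
        norm_num
        push_cast
        ring
      rw [e, hz]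
      push_cast
      ring
    rw [key j, key t]
  · intro k j i s
    simp only [xpt]
    norm_num
    ring
  · intro i j k l
    have hle : Zn n i j k ≤ Yn n j k := by
      have := i.isLt; have := j.isLt; simp only [Zn, Yn]; split_ifs <;> omega
    have h0 : (0:ℝ) < (n:ℝ)+1 := by positivity
    simp only [xpt]
    split
    · positivity
    · apply div_nonneg _ h0.le
      have : (Zn n i j k : ℝ) ≤ (Yn n j k : ℝ) := by exact_mod_cast hle
      linarith

set_option maxHeartbeats 1000000 in
lemma xpt_unique (n : ℕ) (hn : 4 ≤ n) (u : Pt n n) (hu : u ∈ SATPLP n n)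
    (hz : ∀ i j k l, xpt n i j k l = 0 → u i j k l = 0) : u = xpt n := by
  have h0 : 0 < n := by omega
  have h1n : 1 < n := by omega
  have hn2 : n - 2 < n := by omega
  have hn1 : n - 1 < n := by omega
  obtain ⟨hu1, hu2, hu3, _⟩ := hu
  obtain ⟨hx1, hx2, hx3, _⟩ := xpt_mem n hn
  set d : Pt n n := fun i j k l => u i j k l - xpt n i j k l with hd
  have hne : ((n:ℝ)+1) ≠ 0 := by positivity
  have HZ : ∀ (i j : Fin n) k l, xpt n i j k l = 0 → d i j k l = 0 := by
    intro i j k l h; simp only [hd, h, hz i j k l h]; ring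
  have dz0 : ∀ (i j : Fin n) (k : Fin 3), Zn n i j k = 0 → d i j k 0 = 0 := by
    intro i j k h
    apply HZ
    simp [xpt, h]
  have dz1 : ∀ (i j : Fin n) (k : Fin 3), Zn n i j k = Yn n j k → d i j k 1 = 0 := by
    intro i j k h
    apply HZ
    simp [xpt, h]
  have hRj : ∀ (i j : Fin n), d i j 0 0 + d i j 1 0 + d i j 2 0
      = d i ⟨0,h0⟩ 0 0 + d i ⟨0,h0⟩ 1 0 + d i ⟨0,h0⟩ 2 0 := by
    intro i j
    have h := hu2 i j ⟨0,h0⟩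
    have h' := hx2 i j ⟨0,h0⟩
    simp only [Fin.sum_univ_three] at h h'
    simp only [hd]; linarith
  have hYj : ∀ (k : Fin 3) (i j : Fin n), d i j k 0 + d i j k 1
      = d ⟨0,h0⟩ j k 0 + d ⟨0,h0⟩ j k 1 := by
    intro k i j
    have h := hu3 k j i ⟨0,h0⟩
    have h' := hx3 k j i ⟨0,h0⟩
    simp only [hd]; linarith
  have hScell : ∀ j : Fin n,
      (d ⟨0,h0⟩ j 0 0 + d ⟨0,h0⟩ j 0 1) + (d ⟨0,h0⟩ j 1 0 + d ⟨0,h0⟩ j 1 1)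
        + (d ⟨0,h0⟩ j 2 0 + d ⟨0,h0⟩ j 2 1) = 0 := by
    intro j
    have h := hu1 ⟨0,h0⟩ j
    have h' := hx1 ⟨0,h0⟩ j
    simp only [Fin.sum_univ_three, Fin.sum_univ_two] at h h'
    simp only [hd]; linarith
  -- instantiate the abstract system
  set R : ℕ → ℝ := fun m => if h : m < n then
      d ⟨m,h⟩ ⟨0,h0⟩ 0 0 + d ⟨m,h⟩ ⟨0,h0⟩ 1 0 + d ⟨m,h⟩ ⟨0,h0⟩ 2 0 else 0 with hRdef
  set Y0 : ℕ → ℝ := fun m => if h : m < n then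
      d ⟨0,h0⟩ ⟨m,h⟩ 0 0 + d ⟨0,h0⟩ ⟨m,h⟩ 0 1 else 0 with hY0def
  set Y1 : ℕ → ℝ := fun m => if h : m < n then
      d ⟨0,h0⟩ ⟨m,h⟩ 1 0 + d ⟨0,h0⟩ ⟨m,h⟩ 1 1 else 0 with hY1def
  set Y2 : ℕ → ℝ := fun m => if h : m < n then
      d ⟨0,h0⟩ ⟨m,h⟩ 2 0 + d ⟨0,h0⟩ ⟨m,h⟩ 2 1 else 0 with hY2def
  have hA : ∀ j, j < n → Y0 j = R j := by
    intro j hj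
    simp only [hY0def, hRdef, dif_pos hj]
    obtain ⟨a1, a2, a3⟩ := cellA n j hn hj
    have z1 : d ⟨j,hj⟩ ⟨j,hj⟩ 1 0 = 0 := dz0 _ _ _ a1
    have z2 : d ⟨j,hj⟩ ⟨j,hj⟩ 2 0 = 0 := dz0 _ _ _ a2
    have z3 : d ⟨j,hj⟩ ⟨j,hj⟩ 0 1 = 0 := dz1 _ _ _ a3
    have h4 := hRj ⟨j,hj⟩ ⟨j,hj⟩
    have h5 := hYj 0 ⟨j,hj⟩ ⟨j,hj⟩
    linarith
  have hC : ∀ j, 1 ≤ j → j < n → Y1 j = R 0 := by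
    intro j hj1 hj
    simp only [hY1def, hRdef, dif_pos hj, dif_pos h0]
    obtain ⟨a1, a2, a3⟩ := cellC n j hn hj1 hj
    have z1 : d ⟨0,h0⟩ ⟨j,hj⟩ 0 0 = 0 := dz0 _ _ _ a1
    have z2 : d ⟨0,h0⟩ ⟨j,hj⟩ 2 0 = 0 := dz0 _ _ _ a2
    have z3 : d ⟨0,h0⟩ ⟨j,hj⟩ 1 1 = 0 := dz1 _ _ _ a3
    have h4 := hRj ⟨0,h0⟩ ⟨j,hj⟩
    linarith
  have hB : ∀ j, j + 1 < n → R (j+1) = Y0 j + Y1 j := by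
    intro j hj1
    have hj : j < n := by omega
    simp only [hY0def, hY1def, hRdef, dif_pos hj, dif_pos hj1]
    obtain ⟨a1, a2, a3⟩ := cellB n j hn hj1
    have z1 : d ⟨j+1,hj1⟩ ⟨j,hj⟩ 0 1 = 0 := dz1 _ _ _ a1
    have z2 : d ⟨j+1,hj1⟩ ⟨j,hj⟩ 1 1 = 0 := dz1 _ _ _ a2
    have z3 : d ⟨j+1,hj1⟩ ⟨j,hj⟩ 2 0 = 0 := dz0 _ _ _ a3
    have h4 := hRj ⟨j+1,hj1⟩ ⟨j,hj⟩
    have h5 := hYj 0 ⟨j+1,hj1⟩ ⟨j,hj⟩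
    have h6 := hYj 1 ⟨j+1,hj1⟩ ⟨j,hj⟩
    linarith
  have hD : R (n-2) = Y2 0 := by
    simp only [hY2def, hRdef, dif_pos hn2, dif_pos h0]
    obtain ⟨a1, a2, a3⟩ := cellD n hn
    have z1 : d ⟨n-2,hn2⟩ ⟨0,h0⟩ 0 0 = 0 := dz0 _ _ _ a1
    have z2 : d ⟨n-2,hn2⟩ ⟨0,h0⟩ 1 0 = 0 := dz0 _ _ _ a2
    have z3 : d ⟨n-2,hn2⟩ ⟨0,h0⟩ 2 1 = 0 := dz1 _ _ _ a3
    have h4 := hRj ⟨n-2,hn2⟩ ⟨0,h0⟩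
    have h5 := hYj 2 ⟨n-2,hn2⟩ ⟨0,h0⟩
    linarith
  have hN : Y2 (n-1) = 0 := by
    simp only [hY2def, dif_pos hn1]
    obtain ⟨a1, a2⟩ := cellN n hn
    have z1 : d ⟨0,h0⟩ ⟨n-1,hn1⟩ 2 0 = 0 := dz0 _ _ _ a1
    have z2 : d ⟨0,h0⟩ ⟨n-1,hn1⟩ 2 1 = 0 := dz1 _ _ _ a2
    linarith
  have hs : ∀ j, j < n → Y0 j + Y1 j + Y2 j = 0 := by
    intro j hj
    simp only [hY0def, hY1def, hY2def, dif_pos hj]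
    have := hScell ⟨j,hj⟩
    linarith
  have key := linalg n hn R Y0 Y1 Y2 hA hC hB hD hN hs
  -- all coordinates of d vanish
  have hfin : ∀ (i j : Fin n) (k : Fin 3) (l : Fin 2), d i j k l = 0 := by
    intro i j k l
    have hi := i.isLt
    have hj := j.isLt
    obtain ⟨hr, hy0, hy1, hy2⟩ := key j hj
    have hR0 : R i = 0 := (key i hi).1
    simp only [hRdef, dif_pos hi] at hR0
    simp only [hY0def, hY1def, hY2def, dif_pos hj] at hy0 hy1 hy2
    rw [Fin.eta] at hR0
    rw [Fin.eta] at hy0 hy1 hy2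
    have e0 := hYj 0 i j
    have e1 := hYj 1 i j
    have e2 := hYj 2 i j
    have e3 := hRj i j
    have e4 := hRj i ⟨0,h0⟩
    -- combine: row sum of d at (i,j) is 0, and column sums are 0
    have r0 : d i j 0 0 + d i j 1 0 + d i j 2 0 = 0 := by rw [e3]; exact hR0
    have y0 : d i j 0 0 + d i j 0 1 = 0 := by rw [e0]; exact hy0
    have y1 : d i j 1 0 + d i j 1 1 = 0 := by rw [e1]; exact hy1
    have y2 : d i j 2 0 + d i j 2 1 = 0 := by rw [e2]; exact hy2
    have z1 : d i j 1 0 = 0 ∨ d i j 1 1 = 0 := by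
      rcases zsplit1 n i j hn hi hj with h | h
      · exact Or.inl (dz0 _ _ _ h)
      · exact Or.inr (dz1 _ _ _ h)
    have z2 : d i j 0 0 = 0 ∨ d i j 0 1 = 0 ∨ d i j 2 0 = 0 ∨ d i j 2 1 = 0 := by
      rcases zsplit2 n i j hn hi hj with h | h | h | h
      · exact Or.inl (dz0 _ _ _ h)
      · exact Or.inr (Or.inl (dz1 _ _ _ h))
      · exact Or.inr (Or.inr (Or.inl (dz0 _ _ _ h)))
      · exact Or.inr (Or.inr (Or.inr (dz1 _ _ _ h)))
    have all : d i j 0 0 = 0 ∧ d i j 0 1 = 0 ∧ d i j 1 0 = 0 ∧ d i j 1 1 = 0 ∧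
        d i j 2 0 = 0 ∧ d i j 2 1 = 0 := by
      rcases z1 with h1 | h1 <;> rcases z2 with h2 | h2 | h2 | h2 <;>
        exact ⟨by linarith, by linarith, by linarith, by linarith, by linarith, by linarith⟩
    obtain ⟨c1, c2, c3, c4, c5, c6⟩ := all
    match k, l with
    | 0, 0 => exact c1
    | 0, 1 => exact c2
    | 1, 0 => exact c3
    | 1, 1 => exact c4
    | 2, 0 => exact c5
    | 2, 1 => exact c6
  funext i j k l
  have := hfin i j k l
  simp only [hd] at this
  linarith

/-- for every n ≥ 4 the polytope SATP_LP(n,n) has an extreme point all of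
whose coordinates are integer multiples of 1/(n+1), at least one coordinate being equal
to 1/(n+1): a fractional vertex with denominator n+1. -/
theorem stmt13 (n : ℕ) (hn : 4 ≤ n) :
    ∃ x ∈ Set.extremePoints ℝ (SATPLP n n),
      (∀ i j k l, ∃ a : ℤ, x i j k l = (a : ℝ) / (n + 1)) ∧
      (∃ i j k l, x i j k l = 1 / ((n : ℝ) + 1)) := by
  have h0 : 0 < n := by omega
  have h1 : 1 < n := by omega
  refine ⟨xpt n, ?_, ?_, ?_⟩
  · rw [mem_extremePoints]
    refine ⟨xpt_mem n hn, ?_⟩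
    intro x₁ h₁ x₂ h₂ hseg
    simp only [openSegment, Set.mem_setOf_eq] at hseg
    obtain ⟨a, b, ha, hb, hab, hsum⟩ := hseg
    have key : ∀ i j k l, xpt n i j k l = 0 → x₁ i j k l = 0 ∧ x₂ i j k l = 0 := by
      intro i j k l h
      have hs : a * x₁ i j k l + b * x₂ i j k l = 0 := by
        have := congrFun (congrFun (congrFun (congrFun hsum i) j) k) l
        simpa [h] using this
      have n1 := h₁.2.2.2 i j k l
      have n2 := h₂.2.2.2 i j k l
      have hap : a * x₁ i j k l = 0 := by
        have q1 : 0 ≤ a * x₁ i j k l := mul_nonneg ha.le n1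
        have q2 : 0 ≤ b * x₂ i j k l := mul_nonneg hb.le n2
        linarith
      have hbp : b * x₂ i j k l = 0 := by linarith [mul_nonneg ha.le n1]
      exact ⟨(mul_eq_zero.mp hap).resolve_left (ne_of_gt ha),
             (mul_eq_zero.mp hbp).resolve_left (ne_of_gt hb)⟩
    exact ⟨xpt_unique n hn x₁ h₁ (fun i j k l h => (key i j k l h).1),
           xpt_unique n hn x₂ h₂ (fun i j k l h => (key i j k l h).2)⟩
  · intro i j k l
    fin_cases l
    · exact ⟨Zn n i j k, by simp [xpt]⟩
    · exact ⟨(Yn n j k : ℤ) - Zn n i j k, by simp [xpt]⟩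
  · refine ⟨⟨0, h0⟩, ⟨1, h1⟩, 1, 0, ?_⟩
    have hz : Zn n 0 1 1 = 1 := by unfold Zn; norm_num
    show (if (0 : Fin 2) = 0 then ((Zn n (0:ℕ) (1:ℕ) ((1 : Fin 3) : ℕ) : ℕ) : ℝ)
        else (Yn n 1 ((1 : Fin 3) : ℕ) : ℝ) - (Zn n 0 1 ((1 : Fin 3) : ℕ) : ℝ)) / (n+1)
      = 1 / ((n : ℝ) + 1)
    have hk : ((1 : Fin 3) : ℕ) = 1 := rfl
    rw [hk, hz]
    norm_num
end
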